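/- arXiv:2312.14088 — 10 statements merged into one kernel-verified Lean document; each statement's English description precedes it below -/
import Mathlib

section
/- A finite group action on a finite abstract simplicial complex is translative if and only if it preserves some proper coloring of the complex, i.e., there exists a proper coloring γ of the vertices such that γ(g·v) = γ(v) for every vertex v and every group element g. -/
/-- A finite group action on a finite abstract simplicial complex is translative iff
it preserves some proper coloring of the complex. -/
theorem stmt_0 {V : Type} [Fintype V] [DecidableEq V]
    {G : Type} [Group G] [Finite G] (ρ : G →* Equiv.Perm V)
    (K : Finset (Finset V))
    (hdown : ∀ σ ∈ K, ∀ τ ⊆ σ, τ ∈ K)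
    (hact : ∀ (g : G), ∀ σ ∈ K, σ.image (ρ g) ∈ K) :
    (∀ (g : G), ∀ σ ∈ K,
        (∃ τ ∈ K, σ ⊆ τ ∧ σ.image (ρ g) ⊆ τ) → σ.image (ρ g) = σ) ↔
    (∃ (Γ : Type) (γ : V → Γ),
      (∀ σ ∈ K, ∀ v ∈ σ, ∀ w ∈ σ, v ≠ w → γ v ≠ γ w) ∧
      (∀ (g : G) (v : V), γ (ρ g v) = γ v)) := by
  constructor
  · intro htrans
    refine ⟨Set V, fun v => {w | ∃ g : G, ρ g v = w}, ?_, ?_⟩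
    · intro σ hσ v hv w hw hne heq
      simp only [Set.ext_iff, Set.mem_setOf_eq] at heq
      obtain ⟨g, hg⟩ := (heq w).mpr ⟨1, by simp⟩
      have h1 : ({v} : Finset V) ∈ K :=
        hdown σ hσ {v} (Finset.singleton_subset_iff.mpr hv)
      have himg : ({v} : Finset V).image (ρ g) = {w} := by
        simp [hg]
      have := htrans g {v} h1 ⟨σ, hσ, Finset.singleton_subset_iff.mpr hv,
        by rw [himg]; exact Finset.singleton_subset_iff.mpr hw⟩
      rw [himg] at this
      exact hne (Finset.singleton_injective this).symm
    · intro g v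
      ext w
      simp only [Set.mem_setOf_eq]
      constructor
      · rintro ⟨h, rfl⟩
        exact ⟨h * g, by simp [map_mul]⟩
      · rintro ⟨h, rfl⟩
        refine ⟨h * g⁻¹, ?_⟩
        simp [map_mul]
  · rintro ⟨Γ, γ, hp, hinv⟩ g σ hσ ⟨τ, hτ, h1, h2⟩
    have key : ∀ v ∈ σ, ρ g v = v := by
      intro v hv
      by_contra hne
      exact hp τ hτ (ρ g v) (h2 (Finset.mem_image_of_mem _ hv)) v (h1 hv) hne (hinv g v)
    calc σ.image (ρ g) = σ.image id := Finset.image_congr (fun v hv => key v hv)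
      _ = σ := Finset.image_id
end

section
/- Let G be a group of exponent two (every element has order at most two) acting by automorphisms on a meet-semilattice X. Then the action of G is translative if and only if it is proper. -/
/-- For a group of exponent two acting on a meet-semilattice,
translativity and properness coincide. -/
theorem stmt_2 {X : Type} [SemilatticeInf X] {G : Type} [Group G]
    (hexp : ∀ g : G, g * g = 1) (ρ : G →* (X ≃o X)) :
    (∀ (g : G) (x : X), (∃ z, x ≤ z ∧ ρ g x ≤ z) → ρ g x = x) ↔
    (∀ (g : G) (x : X), ρ g x = x → ∀ y ≤ x, ρ g y = y) := by
  have hinv : ∀ (g : G) (x : X), ρ g (ρ g x) = x := by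
    intro g x
    have : ρ g * ρ g = 1 := by rw [← map_mul, hexp, map_one]
    calc ρ g (ρ g x) = (ρ g * ρ g) x := rfl
    _ = x := by rw [this]; rfl
  constructor
  · intro h g x hx y hy
    exact h g y ⟨x, hy, hx ▸ (ρ g).monotone hy⟩
  · intro h g x ⟨z, hz1, hz2⟩
    have h1 : x ≤ z ⊓ ρ g z := by
      refine le_inf hz1 ?_
      have := (ρ g).monotone hz2
      rwa [hinv] at this
    have hfix : ρ g (z ⊓ ρ g z) = z ⊓ ρ g z := by
      rw [map_inf, hinv, inf_comm]
    exact h g (z ⊓ ρ g z) hfix x h1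
end

section
/- Suppose a finite group G acts translatively on a finite simplicial complex Σ, and suppose the number k of G-orbits of vertices satisfies k ≤ dim(Σ). Then we reach a contradiction; equivalently, if G acts translatively on Σ then the number of vertex orbits is at least dim(Σ)+1. -/
/-- If a finite group acts translatively on a finite simplicial complex of dimension `d`
and the number of vertex orbits is at most `d`, we reach a contradiction. -/
theorem stmt_4 {V : Type} [Fintype V] [DecidableEq V]
    {G : Type} [Group G] [Finite G] (ρ : G →* Equiv.Perm V)
    (K : Finset (Finset V))
    (hdown : ∀ σ ∈ K, ∀ τ ⊆ σ, τ ∈ K)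
    (hact : ∀ (g : G), ∀ σ ∈ K, σ.image (ρ g) ∈ K)
    (hvert : ∀ v : V, {v} ∈ K)
    (htrans : ∀ (g : G), ∀ σ ∈ K,
      (∃ τ ∈ K, σ ⊆ τ ∧ σ.image (ρ g) ⊆ τ) → σ.image (ρ g) = σ)
    (d : ℕ)
    (hdim : ∀ σ ∈ K, σ.card ≤ d + 1)
    (htop : ∃ σ ∈ K, σ.card = d + 1)
    (hk : Nat.card {O : Set V // ∃ v : V, O = Set.range fun g : G => ρ g v} ≤ d) :
    False := by
  obtain ⟨σ, hσK, hσcard⟩ := htop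
  -- map each vertex of σ to its orbit
  set Orb := {O : Set V // ∃ v : V, O = Set.range fun g : G => ρ g v} with hOrb
  let f : {x // x ∈ σ} → Orb := fun x => ⟨Set.range fun g : G => ρ g x.1, ⟨x.1, rfl⟩⟩
  have hinj : Function.Injective f := by
    rintro ⟨v, hv⟩ ⟨w, hw⟩ h
    have hr : (Set.range fun g : G => ρ g v) = Set.range fun g : G => ρ g w :=
      congrArg Subtype.val h
    have hvmem : v ∈ Set.range fun g : G => ρ g w := by
      rw [← hr]; exact ⟨1, by simp⟩
    obtain ⟨g, hg⟩ := hvmem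
    simp only at hg
    have h1 : ({w} : Finset V) ∈ K := hvert w
    have h2 : ({w} : Finset V).image (ρ g) = {w} := by
      apply htrans g _ h1
      exact ⟨σ, hσK, by simpa using hw, by simp [hg, hv]⟩
    have : ρ g w = w := by simpa using h2
    simp only [Subtype.mk.injEq]
    rw [← hg, this]
  have hfin : Finite Orb := by
    have : Finite (Set V) := inferInstance
    exact Subtype.finite
  have hle := Nat.card_le_card_of_injective f hinj
  have hcard : Nat.card {x // x ∈ σ} = σ.card := by
    simp [Nat.card_eq_fintype_card]
  omega
end

section
/- Let Σ be a finite nonempty abstract simplicial complex of dimension d with an action of a group G by simplicial automorphisms, over an infinite field K. Then the action is translative if and only if the Stanley–Reisner ring K[Σ] admits a linear system of parameters θ_0, …, θ_d with each θ_i contained in the invariant subring K[Σ]^G. -/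
open Module Submodule

private lemma sr_sum_single {V : Type} [Fintype V] [DecidableEq V] {𝕜 : Type} [Field 𝕜]
    (σ : Finset V) (c : V → 𝕜) :
    (fun v => if v ∈ σ then c v else 0) = ∑ u ∈ σ, c u • (Pi.single u (1:𝕜) : V → 𝕜) := by
  funext v
  rw [Finset.sum_apply]
  simp only [Pi.smul_apply, Pi.single_apply, smul_eq_mul, mul_ite, mul_one, mul_zero]
  rw [Finset.sum_ite_eq σ v c]

/-- Translativity is equivalent to the existence of a linear system of parameters
for the Stanley–Reisner ring lying in the invariant subring; the l.s.o.p. condition is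
expressed via the Kind–Kleinschmidt criterion. -/
theorem stmt_6 {V : Type} [Fintype V] [DecidableEq V]
    {𝕜 : Type} [Field 𝕜] [Infinite 𝕜]
    {G : Type} [Group G] (ρ : G →* Equiv.Perm V)
    (K : Finset (Finset V)) (hne : K.Nonempty)
    (hdown : ∀ σ ∈ K, ∀ τ ⊆ σ, τ ∈ K)
    (hact : ∀ (g : G), ∀ σ ∈ K, σ.image (ρ g) ∈ K)
    (d : ℕ)
    (hdim : ∀ σ ∈ K, σ.card ≤ d + 1)
    (htop : ∃ σ ∈ K, σ.card = d + 1) :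
    (∀ (g : G), ∀ σ ∈ K,
        (∃ τ ∈ K, σ ⊆ τ ∧ σ.image (ρ g) ⊆ τ) → σ.image (ρ g) = σ) ↔
    (∃ θ : Fin (d + 1) → V → 𝕜,
      (∀ σ ∈ K, σ.Nonempty →
        Module.finrank 𝕜 (Submodule.span 𝕜
          (Set.range fun i : Fin (d + 1) =>
            fun v : V => if v ∈ σ then θ i v else 0)) = σ.card) ∧
      (∀ (i : Fin (d + 1)) (g : G) (v : V), θ i (ρ g v) = θ i v)) := by
  classical
  constructor
  · -- translative ⟹ invariant l.s.o.p.
    intro htrans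
    -- the orbit equivalence relation
    let s : Setoid V :=
      ⟨fun v w => ∃ g : G, ρ g v = w,
        ⟨fun v => ⟨1, by simp⟩,
         fun {v w} h => by
           obtain ⟨g, hg⟩ := h
           exact ⟨g⁻¹, by rw [← hg]; simp⟩,
         fun {u v w} h1 h2 => by
           obtain ⟨g, hg⟩ := h1; obtain ⟨g', hg'⟩ := h2
           exact ⟨g' * g, by rw [map_mul]; simp [hg, hg']⟩⟩⟩
    haveI : Finite (Quotient s) := Quotient.finite s
    haveI : Fintype (Quotient s) := Fintype.ofFinite _
    let emb : Quotient s ↪ 𝕜 :=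
      (Fintype.equivFin (Quotient s)).toEmbedding.trans
        (Fin.valEmbedding.trans (Infinite.natEmbedding 𝕜))
    let t : V → 𝕜 := fun v => emb (Quotient.mk s v)
    have ht_inv : ∀ (g : G) (v : V), t (ρ g v) = t v := fun g v =>
      (congrArg emb (Quotient.sound (⟨g, rfl⟩ : s.r v (ρ g v)))).symm
    have ht_inj : ∀ σ ∈ K, Set.InjOn t ↑σ := by
      intro σ hσ v hv w hw htvw
      obtain ⟨g, hg⟩ : ∃ g : G, ρ g v = w :=
        Quotient.exact (emb.injective htvw)
      have h1 : ({v} : Finset V) ∈ K :=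
        hdown σ hσ {v} (Finset.singleton_subset_iff.mpr hv)
      have h2 := htrans g {v} h1 ⟨σ, hσ, Finset.singleton_subset_iff.mpr hv, by
        rw [Finset.image_singleton, hg]; exact Finset.singleton_subset_iff.mpr hw⟩
      rw [Finset.image_singleton, hg] at h2
      exact (Finset.singleton_inj.mp h2).symm
    refine ⟨fun i v => t v ^ (i : ℕ), ?_, fun i g v => by
      show t (ρ g v) ^ (i : ℕ) = t v ^ (i : ℕ)
      rw [ht_inv]⟩
    intro σ hσ hσne
    have hinj := ht_inj σ hσ
    have hcard := hdim σ hσ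
    have hpos : 0 < σ.card := Finset.card_pos.mpr hσne
    have hspan : Submodule.span 𝕜 (Set.range fun i : Fin (d+1) =>
        fun v : V => if v ∈ σ then t v ^ (i : ℕ) else 0)
        = Submodule.span 𝕜 (Set.range fun u : {x // x ∈ σ} =>
            (Pi.single (u : V) (1:𝕜) : V → 𝕜)) := by
      apply le_antisymm
      · rw [Submodule.span_le]
        rintro _ ⟨i, rfl⟩
        show (fun v : V => if v ∈ σ then t v ^ (i : ℕ) else 0) ∈ _
        rw [sr_sum_single σ (fun v => t v ^ (i : ℕ))]
        exact Submodule.sum_mem _ fun u hu => Submodule.smul_mem _ _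
          (Submodule.subset_span ⟨⟨u, hu⟩, rfl⟩)
      · rw [Submodule.span_le]
        rintro _ ⟨⟨v₀, hv₀⟩, rfl⟩
        set p : Polynomial 𝕜 := Lagrange.basis σ t v₀ with hp
        have hdeg : p.natDegree < d + 1 := by
          rw [hp, Lagrange.natDegree_basis hinj hv₀]; omega
        have key : (Pi.single v₀ (1:𝕜) : V → 𝕜)
            = ∑ i : Fin (d+1), p.coeff i •
                (fun v : V => if v ∈ σ then t v ^ (i : ℕ) else 0) := by
          funext v
          rw [Finset.sum_apply]
          simp only [Pi.smul_apply, smul_eq_mul]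
          by_cases hv : v ∈ σ
          · simp only [hv, if_true]
            have hev : ∑ i : Fin (d+1), p.coeff i * t v ^ (i : ℕ) = p.eval (t v) := by
              rw [Polynomial.eval_eq_sum_range' hdeg (t v),
                ← Fin.sum_univ_eq_sum_range (fun i => p.coeff i * t v ^ i)]
            rw [hev]
            by_cases hvv : v = v₀
            · subst hvv
              rw [Pi.single_eq_same, hp, Lagrange.eval_basis_self hinj hv]
            · rw [Pi.single_eq_of_ne hvv, hp,
                Lagrange.eval_basis_of_ne (Ne.symm hvv) hv]
          · have hne' : v ≠ v₀ := fun h => hv (h ▸ hv₀)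
            simp [hv, Pi.single_eq_of_ne hne']
        show (Pi.single v₀ (1:𝕜) : V → 𝕜) ∈ _
        rw [key]
        exact Submodule.sum_mem _ fun i _ => Submodule.smul_mem _ _
          (Submodule.subset_span ⟨i, rfl⟩)
    rw [hspan]
    have hb : LinearIndependent 𝕜 (fun u : {x // x ∈ σ} =>
        (Pi.single (u : V) (1:𝕜) : V → 𝕜)) := by
      have h1 := (Pi.basisFun 𝕜 V).linearIndependent
      have h2 := h1.comp (Subtype.val : {x // x ∈ σ} → V) Subtype.val_injective
      have h3 : (⇑(Pi.basisFun 𝕜 V) ∘ (Subtype.val : {x // x ∈ σ} → V))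
          = fun u : {x // x ∈ σ} => (Pi.single (u : V) (1:𝕜) : V → 𝕜) := by
        funext u
        simp [Function.comp]
      rwa [h3] at h2
    rw [finrank_span_eq_card hb, Fintype.card_coe]
  · -- invariant l.s.o.p. ⟹ translative
    rintro ⟨θ, hrank, hinv⟩ g σ hσ ⟨τ, hτ, hστ, hgστ⟩
    have hfix : ∀ v ∈ σ, ρ g v = v := by
      intro v hv
      by_contra hne'
      set w := ρ g v with hw
      have hwv : w ≠ v := hne'
      have hvτ : v ∈ τ := hστ hv
      have hwτ : w ∈ τ := hgστ (Finset.mem_image_of_mem _ hv)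
      have hθ : ∀ i, θ i w = θ i v := fun i => hinv i g v
      have hr := hrank τ hτ ⟨v, hvτ⟩
      have hvew : v ∈ τ.erase w := Finset.mem_erase.mpr ⟨hwv.symm, hvτ⟩
      set B : V → (V → 𝕜) := fun u =>
        (Pi.single u (1:𝕜) : V → 𝕜) +
          (if u = v then (Pi.single w (1:𝕜) : V → 𝕜) else 0) with hB
      have hle : Submodule.span 𝕜 (Set.range fun i : Fin (d+1) =>
          fun x : V => if x ∈ τ then θ i x else 0)
          ≤ Submodule.span 𝕜 (↑((τ.erase w).image B) : Set (V → 𝕜)) := by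
        rw [Submodule.span_le]
        rintro _ ⟨i, rfl⟩
        have hsum : ∑ u ∈ τ.erase w, θ i u • B u
            = (∑ u ∈ τ.erase w, θ i u • (Pi.single u (1:𝕜) : V → 𝕜))
              + θ i v • (Pi.single w (1:𝕜) : V → 𝕜) := by
          simp only [hB, smul_add]
          rw [Finset.sum_add_distrib]
          congr 1
          have hcongr : ∀ u ∈ τ.erase w,
              θ i u • (if u = v then (Pi.single w (1:𝕜) : V → 𝕜) else 0)
              = if u = v then θ i v • (Pi.single w (1:𝕜) : V → 𝕜) else 0 := by
            intro u _
            split <;> simp_all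
          rw [Finset.sum_congr rfl hcongr, Finset.sum_ite_eq' (τ.erase w) v
            (fun _ => θ i v • (Pi.single w (1:𝕜) : V → 𝕜)), if_pos hvew]
        have heq : (fun x : V => if x ∈ τ then θ i x else 0)
            = ∑ u ∈ τ.erase w, θ i u • B u := by
          rw [hsum]
          funext x
          rw [Pi.add_apply, Finset.sum_apply]
          simp only [Pi.smul_apply, Pi.single_apply, smul_eq_mul, mul_ite,
            mul_one, mul_zero]
          rw [Finset.sum_ite_eq (τ.erase w) x (fun u => θ i u)]
          by_cases hxw : x = w
          · subst hxw
            simp [Finset.mem_erase, hwτ, hθ i]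
          · by_cases hxτ : x ∈ τ <;> simp [Finset.mem_erase, hxw, hxτ]
        show (fun x : V => if x ∈ τ then θ i x else 0) ∈ _
        rw [heq]
        exact Submodule.sum_mem _ fun u hu => Submodule.smul_mem _ _
          (Submodule.subset_span (Finset.mem_coe.mpr (Finset.mem_image_of_mem B hu)))
      have h1 : τ.card ≤ ((τ.erase w).image B).card := by
        rw [← hr]
        exact le_trans (Submodule.finrank_mono hle) (finrank_span_finset_le_card _)
      have h2 : ((τ.erase w).image B).card ≤ τ.card - 1 :=
        le_trans Finset.card_image_le (le_of_eq (Finset.card_erase_of_mem hwτ))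
      have h3 : 0 < τ.card := Finset.card_pos.mpr ⟨v, hvτ⟩
      omega
    calc σ.image (ρ g) = σ.image id := Finset.image_congr (fun x hx => hfix x hx)
    _ = σ := Finset.image_id
end

section
/- Given a proper coloring γ: V(Σ) → {0,1,…,c} of a d-dimensional simplicial complex Σ with c ≥ d, the linear forms θ_i := Σ_{v ∈ V(Σ)} γ(v)^i x_v for i = 0,…,d form a linear system of parameters for the Stanley–Reisner ring K[Σ] over any field K of characteristic zero (or with at least c+1 distinct color values). -/
/-- Given a proper coloring `γ : V → {0,…,c}` of a `d`-dimensional complex with `c ≥ d`,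
the linear forms `θ_i = Σ_v γ(v)^i x_v` form a linear system of parameters for the
Stanley–Reisner ring, expressed via the Kind–Kleinschmidt criterion. -/
theorem stmt_7 {V : Type} [Fintype V] [DecidableEq V]
    {𝕜 : Type} [Field 𝕜] [CharZero 𝕜]
    (K : Finset (Finset V))
    (hdown : ∀ σ ∈ K, ∀ τ ⊆ σ, τ ∈ K)
    (d c : ℕ) (hcd : d ≤ c)
    (hdim : ∀ σ ∈ K, σ.card ≤ d + 1)
    (γ : V → ℕ) (hγc : ∀ v : V, γ v ≤ c)
    (hproper : ∀ σ ∈ K, ∀ v ∈ σ, ∀ w ∈ σ, v ≠ w → γ v ≠ γ w) :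
    ∀ σ ∈ K, σ.Nonempty →
      Module.finrank 𝕜 (Submodule.span 𝕜
        (Set.range fun i : Fin (d + 1) =>
          fun v : V => if v ∈ σ then (γ v : 𝕜) ^ (i : ℕ) else 0)) = σ.card := by
  intro σ hσ hne
  classical
  set g : V → 𝕜 := fun v => (γ v : 𝕜) with hg
  set θ : Fin (d + 1) → V → 𝕜 := fun i v => if v ∈ σ then g v ^ (i : ℕ) else 0 with hθ
  set χ : V → V → 𝕜 := fun v => Pi.single v 1 with hχ
  have hinj : Set.InjOn g σ := by
    intro v hv w hw h
    by_contra hne'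
    exact hproper σ hσ v hv w hw hne' (Nat.cast_injective h)
  -- each θ i is in the span of the χ v, v ∈ σ
  have hθ_eq : ∀ i : Fin (d + 1), θ i = ∑ v ∈ σ, g v ^ (i : ℕ) • χ v := by
    intro i
    funext w
    simp only [Finset.sum_apply, Pi.smul_apply, hχ, Pi.single_apply, smul_eq_mul,
      mul_ite, mul_one, mul_zero]
    rw [Finset.sum_ite_eq σ w (fun v => g v ^ (i : ℕ))]
  have hle1 : Submodule.span 𝕜 (Set.range θ) ≤ Submodule.span 𝕜 (χ '' σ) := by
    rw [Submodule.span_le]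
    rintro - ⟨i, rfl⟩
    rw [hθ_eq i]
    exact Submodule.sum_mem _ fun v hv => Submodule.smul_mem _ _
      (Submodule.subset_span ⟨v, hv, rfl⟩)
  -- each χ v, v ∈ σ, is in the span of the θ i
  have hle2 : Submodule.span 𝕜 (χ '' σ) ≤ Submodule.span 𝕜 (Set.range θ) := by
    rw [Submodule.span_le]
    rintro - ⟨v0, hv0, rfl⟩
    set p : Polynomial 𝕜 := Lagrange.basis σ g v0 with hp
    have hdeg : p.natDegree < d + 1 := by
      rw [hp, Lagrange.natDegree_basis hinj hv0]
      have := hdim σ hσ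
      omega
    have key : χ v0 = ∑ i : Fin (d + 1), p.coeff (i : ℕ) • θ i := by
      funext w
      simp only [Finset.sum_apply, Pi.smul_apply, hθ, smul_eq_mul, mul_ite, mul_zero]
      by_cases hw : w ∈ σ
      · simp only [hw, if_true]
        have : ∑ i : Fin (d + 1), p.coeff (i : ℕ) * g w ^ (i : ℕ) = p.eval (g w) := by
          rw [Polynomial.eval_eq_sum_range' hdeg (g w)]
          exact Fin.sum_univ_eq_sum_range (fun i => p.coeff i * g w ^ i) (d + 1)
        rw [this]
        by_cases hvw : w = v0
        · subst hvw
          rw [hp, Lagrange.eval_basis_self hinj hw]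
          simp [hχ]
        · rw [hp, Lagrange.eval_basis_of_ne (fun h => hvw h.symm) hw]
          simp [hχ, Pi.single_eq_of_ne hvw]
      · simp only [hw, if_false, Finset.sum_const_zero]
        have hvw : w ≠ v0 := fun h => hw (h ▸ hv0)
        simp [hχ, Pi.single_eq_of_ne hvw]
    rw [key]
    exact Submodule.sum_mem _ fun i _ => Submodule.smul_mem _ _
      (Submodule.subset_span ⟨i, rfl⟩)
  have hspan : Submodule.span 𝕜 (Set.range θ) = Submodule.span 𝕜 (χ '' σ) :=
    le_antisymm hle1 hle2
  have hrange : χ '' (σ : Set V) = Set.range fun v : (σ : Set V) => χ (v : V) :=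
    Set.image_eq_range χ (σ : Set V)
  have hli : LinearIndependent 𝕜 fun v : (σ : Set V) => χ (v : V) := by
    have hb : LinearIndependent 𝕜 fun v : V => χ v := by
      have hb' := (Pi.basisFun 𝕜 V).linearIndependent
      have : χ = fun v => Pi.basisFun 𝕜 V v := by
        funext v
        rw [hχ, Pi.basisFun_apply]
      rw [this]
      exact hb'
    exact hb.comp _ Subtype.val_injective
  rw [hspan, hrange, finrank_span_eq_card hli]
  simp
end

section
/- Let P ⊆ ℝ^d be a lattice polytope with a lattice triangulation Δ preserved by an affine action ρ of a group G preserving the lattice. If the induced action on Δ is proper, then for every g ∈ G the fixed-point set P^g = {x ∈ P : ρ(g)(x) = x} is exactly the union of the simplices in Δ^g; in particular P^g is a polytope triangulated by the subcomplex Δ^g, and if Δ is unimodular then so is Δ^g. -/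
/-- A lattice simplex (given by its vertex finset) is unimodular w.r.t. the lattice `M`
if its vertices lie in `M` and the differences from any vertex generate, over `ℤ`,
the intersection of their real span with `M`. -/
def IsUnimodularSimplex {E : Type} [AddCommGroup E] [Module ℝ E]
    (M : AddSubgroup E) (σ : Finset E) : Prop :=
  (↑σ ⊆ (M : Set E)) ∧ ∀ x₀ ∈ σ,
    ((AddSubgroup.closure ((fun x => x - x₀) '' (σ : Set E)) : AddSubgroup E) : Set E) =
      ((Submodule.span ℝ ((fun x => x - x₀) '' (σ : Set E)) : Submodule ℝ E) : Set E) ∩ M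

/-- For a proper affine action preserving a lattice triangulation `Δ` of `P`, the fixed set
`P^g` is exactly the union of the simplices fixed by `g`; the fixed simplices form a
subcomplex, and unimodularity is inherited. -/
theorem stmt_8 {E : Type} [AddCommGroup E] [Module ℝ E] [DecidableEq E]
    {G : Type} [Group G] (ρ : G →* (E ≃ᵃ[ℝ] E))
    (Δ : Geometry.SimplicialComplex ℝ E) (M : AddSubgroup E) (P : Set E)
    (hP : P = Δ.space)
    (hlat : ∀ σ ∈ Δ.faces, ↑σ ⊆ (M : Set E))
    (hM : ∀ (g : G), ∀ x ∈ M, ρ g x ∈ M)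
    (hpres : ∀ (g : G), ∀ σ ∈ Δ.faces, σ.image (ρ g) ∈ Δ.faces)
    (hproper : ∀ (g : G), ∀ σ ∈ Δ.faces, σ.image (ρ g) = σ → ∀ v ∈ σ, ρ g v = v)
    (g : G) :
    ({x ∈ P | ρ g x = x} =
        ⋃ σ ∈ {σ ∈ Δ.faces | σ.image (ρ g) = σ}, convexHull ℝ (σ : Set E)) ∧
    (∀ σ ∈ Δ.faces, σ.image (ρ g) = σ → ∀ τ ∈ Δ.faces, τ ⊆ σ → τ.image (ρ g) = τ) ∧
    ((∀ σ ∈ Δ.faces, IsUnimodularSimplex M σ) →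
      ∀ σ ∈ Δ.faces, σ.image (ρ g) = σ → IsUnimodularSimplex M σ) := by
  -- the fixed-point set of the affine equivalence `ρ g` is convex
  have hconv : Convex ℝ {x : E | ρ g x = x} := by
    intro x hx y hy a b ha hb hab
    have := Convex.combo_affine_apply (f := (ρ g).toAffineMap) (x := x) (y := y) hab
    simp only [Set.mem_setOf_eq] at hx hy ⊢
    simp only [AffineEquiv.coe_toAffineMap] at this
    rw [this, hx, hy]
  -- pointwise-fixed simplices have pointwise-fixed convex hulls
  have hfixhull : ∀ σ ∈ Δ.faces, σ.image (ρ g) = σ →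
      ∀ x ∈ convexHull ℝ (σ : Set E), ρ g x = x := by
    intro σ hσ hfix x hx
    have : (σ : Set E) ⊆ {x : E | ρ g x = x} := fun v hv =>
      hproper g σ hσ hfix v hv
    exact convexHull_min this hconv hx
  -- image of a convex hull
  have himg : ∀ σ : Finset E, (ρ g) '' (convexHull ℝ (σ : Set E)) =
      convexHull ℝ ((σ.image (ρ g) : Finset E) : Set E) := by
    intro σ
    rw [Finset.coe_image]
    simpa using (ρ g).toAffineMap.image_convexHull (σ : Set E)
  -- key: a fixed point of a simplex lies in a setwise-fixed face
  have key : ∀ n : ℕ, ∀ σ ∈ Δ.faces, σ.card ≤ n → ∀ x ∈ convexHull ℝ (σ : Set E),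
      ρ g x = x → ∃ τ ∈ Δ.faces, τ.image (ρ g) = τ ∧ x ∈ convexHull ℝ (τ : Set E) := by
    intro n
    induction n with
    | zero =>
      intro σ hσ hcard x hx _
      interval_cases h : σ.card
      · exact absurd (Finset.card_eq_zero.mp h ▸ hσ) Δ.empty_notMem
    | succ n ih =>
      intro σ hσ hcard x hx hgx
      have hx' : x ∈ convexHull ℝ ((σ.image (ρ g) : Finset E) : Set E) := by
        rw [← himg σ]
        exact ⟨x, hx, hgx⟩
      have hxi : x ∈ convexHull ℝ ((σ ∩ σ.image (ρ g) : Finset E) : Set E) := by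
        rw [Finset.coe_inter]
        exact Δ.inter_subset_convexHull hσ (hpres g σ hσ) ⟨hx, hx'⟩
      have hne : (σ ∩ σ.image (ρ g)) ≠ ∅ := by
        intro h
        rw [h] at hxi
        simp at hxi
      have hτ : (σ ∩ σ.image (ρ g)) ∈ Δ.faces :=
        Δ.down_closed hσ Finset.inter_subset_left (Finset.nonempty_iff_ne_empty.mpr hne)
      by_cases hcase : σ ∩ σ.image (ρ g) = σ
      · -- σ ⊆ image, hence image = σ
        have hsub : σ ⊆ σ.image (ρ g) := by
          intro v hv
          have := hcase ▸ hv
          exact (Finset.mem_inter.mp this).2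
        have : σ.image (ρ g) = σ :=
          (Finset.eq_of_subset_of_card_le hsub (Finset.card_image_le)).symm
        exact ⟨σ, hσ, this, hx⟩
      · have hlt : (σ ∩ σ.image (ρ g)).card < σ.card :=
          Finset.card_lt_card (lt_of_le_of_ne Finset.inter_subset_left hcase)
        exact ih _ hτ (by omega) x hxi hgx
  refine ⟨?_, ?_, ?_⟩
  · ext x
    simp only [Set.mem_setOf_eq, Set.mem_iUnion, hP]
    constructor
    · rintro ⟨hxP, hgx⟩
      obtain ⟨σ, hσ⟩ := Set.mem_iUnion.mp hxP
      obtain ⟨hσf, hxσ⟩ := Set.mem_iUnion.mp hσ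
      obtain ⟨τ, hτ, hfix, hxτ⟩ := key σ.card σ hσf le_rfl x hxσ hgx
      exact ⟨τ, ⟨⟨hτ, hfix⟩, hxτ⟩⟩
    · rintro ⟨σ, ⟨⟨hσ, hfix⟩, hx⟩⟩
      refine ⟨?_, hfixhull σ hσ hfix x hx⟩
      exact Set.mem_iUnion.mpr ⟨σ, Set.mem_iUnion.mpr ⟨hσ, hx⟩⟩
  · intro σ hσ hfix τ hτ hsub
    apply Finset.ext
    intro v
    constructor
    · intro hv
      obtain ⟨w, hw, rfl⟩ := Finset.mem_image.mp hv
      rwa [hproper g σ hσ hfix w (hsub hw)]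
    · intro hv
      exact Finset.mem_image.mpr ⟨v, hv, hproper g σ hσ hfix v (hsub hv)⟩
  · intro huni σ hσ _
    exact huni σ hσ
end

section
/- Let Σ be a finite abstract simplicial complex of dimension d with a proper action ρ of a finite group G. Then in R(G)[[t]] the equivariant Hilbert series of ℂ[Σ] equals Σ_{i=0}^{d+1} f_{i-1}^Σ · t^i/(1−t)^i, where f_{i-1}^Σ is the character of the permutation representation of G on the (i−1)-dimensional faces of Σ. -/
lemma aux_card_funSum (α : Type*) [Fintype α] [DecidableEq α] (k : ℕ) :
    Nat.card {f : α → ℕ // ∑ a, f a = k} = (Fintype.card α + k - 1).choose k := by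
  have e1 : {f : α → ℕ // ∑ a, f a = k} ≃ {m : Multiset α // Multiset.card m = k} := by
    refine (Equiv.subtypeEquiv
      (Finsupp.equivFunOnFinite.symm.trans Finsupp.orderIsoMultiset.toEquiv) ?_)
    intro f
    simp only [Equiv.trans_apply]
    rw [show (Finsupp.orderIsoMultiset.toEquiv (Finsupp.equivFunOnFinite.symm f) : Multiset α)
        = Finsupp.toMultiset (Finsupp.equivFunOnFinite.symm f) from rfl,
      Finsupp.card_toMultiset, Finsupp.sum_fintype]
    · simp [Finsupp.equivFunOnFinite]; exact Iff.rfl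
    · intro; rfl
  have e2 : {m : Multiset α // Multiset.card m = k} ≃ Sym α k := Equiv.refl _
  rw [Nat.card_congr (e1.trans e2), Nat.card_eq_fintype_card, Sym.card_sym_eq_choose]

lemma aux_fiber_card {V : Type} [Fintype V] [DecidableEq V] (σ : Finset V) (m : ℕ)
    (hcard : ∀ (α : Type) [Fintype α] [DecidableEq α] (k : ℕ),
      Nat.card {f : α → ℕ // ∑ a, f a = k} = (Fintype.card α + k - 1).choose k) :
    Nat.card {α : V → ℕ // (∑ v, α v) = m ∧ (Finset.univ.filter fun v => α v ≠ 0) = σ}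
      = if σ.card ≤ m then (σ.card + (m - σ.card) - 1).choose (m - σ.card) else 0 := by
  have hsum : ∀ α : V → ℕ, (Finset.univ.filter fun v => α v ≠ 0) = σ →
      ∑ v ∈ σ, α v = ∑ v, α v := by
    intro α hα
    refine Finset.sum_subset (Finset.subset_univ σ) ?_
    intro v _ hv
    by_contra h
    exact hv (hα ▸ Finset.mem_filter.2 ⟨Finset.mem_univ v, h⟩)
  have hmem : ∀ α : V → ℕ, (Finset.univ.filter fun v => α v ≠ 0) = σ →
      ∀ v ∈ σ, 1 ≤ α v := by
    intro α hα v hv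
    have := hα ▸ hv
    exact Nat.one_le_iff_ne_zero.2 (Finset.mem_filter.1 this).2
  have key : ∀ α : V → ℕ, (∀ v ∈ σ, 1 ≤ α v) →
      ∑ x ∈ σ.attach, (α x.1 - 1) + σ.card = ∑ v ∈ σ, α v := by
    intro α h
    rw [← Finset.card_attach, Finset.card_eq_sum_ones, ← Finset.sum_add_distrib]
    rw [Finset.sum_congr rfl (fun x _ => Nat.sub_add_cancel (h x.1 x.2))]
    exact Finset.sum_attach σ α
  by_cases hm : σ.card ≤ m
  · rw [if_pos hm]
    have e : {α : V → ℕ // (∑ v, α v) = m ∧ (Finset.univ.filter fun v => α v ≠ 0) = σ}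
        ≃ {f : {x // x ∈ σ} → ℕ // ∑ a, f a = m - σ.card} := by
      refine ⟨fun α => ⟨fun x => α.1 x.1 - 1, ?_⟩, fun f => ⟨fun v =>
          if h : v ∈ σ then f.1 ⟨v, h⟩ + 1 else 0, ?_, ?_⟩, ?_, ?_⟩
      · obtain ⟨α, hα1, hα2⟩ := α
        have h1 := key α (hmem α hα2)
        rw [hsum α hα2, hα1] at h1
        rw [Finset.univ_eq_attach]
        dsimp only
        omega
      · obtain ⟨f, hf⟩ := f
        rw [← Finset.sum_subset (Finset.subset_univ σ) (by intro v _ hv; simp [hv]),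
          ← Finset.sum_attach σ (fun v => if h : v ∈ σ then f ⟨v, h⟩ + 1 else 0)]
        rw [Finset.sum_congr rfl (fun x _ => by rw [dif_pos x.2, Subtype.coe_eta]),
          Finset.sum_add_distrib]
        simp only [Finset.sum_const, Finset.card_attach, smul_eq_mul, mul_one]
        rw [Finset.univ_eq_attach] at hf
        omega
      · obtain ⟨f, hf⟩ := f
        ext v
        simp only [Finset.mem_filter, Finset.mem_univ, true_and]
        by_cases h : v ∈ σ <;> simp [h]
      · rintro ⟨α, hα1, hα2⟩
        ext v
        by_cases h : v ∈ σ
        · simp only [dif_pos h]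
          exact Nat.sub_add_cancel (hmem α hα2 v h)
        · simp only [dif_neg h]
          by_contra hne
          exact h (hα2 ▸ Finset.mem_filter.2 ⟨Finset.mem_univ v, fun hh => hne hh.symm⟩)
      · rintro ⟨f, hf⟩
        ext x
        simp [x.2]
    rw [Nat.card_congr e, hcard, Fintype.card_coe]
  · rw [if_neg hm, Nat.card_eq_zero]
    left
    constructor
    rintro ⟨α, hα1, hα2⟩
    apply hm
    calc σ.card = ∑ _v ∈ σ, 1 := by rw [Finset.card_eq_sum_ones]
    _ ≤ ∑ v ∈ σ, α v := Finset.sum_le_sum fun v hv => hmem α hα2 v hv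
    _ = m := by rw [hsum α hα2, hα1]

lemma aux_count {V : Type} [Fintype V] [DecidableEq V]
    {G : Type} [Group G] (ρ : G →* Equiv.Perm V)
    (K : Finset (Finset V))
    (hproper : ∀ (g : G), ∀ σ ∈ K, σ.image (ρ g) = σ → ∀ v ∈ σ, ρ g v = v)
    (d : ℕ) (hdim : ∀ σ ∈ K, σ.card ≤ d + 1) (g : G) (m : ℕ)
    (hfib : ∀ (σ : Finset V),
      Nat.card {α : V → ℕ // (∑ v, α v) = m ∧ (Finset.univ.filter fun v => α v ≠ 0) = σ}
        = if σ.card ≤ m then (σ.card + (m - σ.card) - 1).choose (m - σ.card) else 0) :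
    Nat.card {α : V → ℕ // (∑ v, α v) = m ∧
        (Finset.univ.filter fun v => α v ≠ 0) ∈ K ∧ ∀ v, α (ρ g v) = α v}
      = ∑ i ∈ Finset.range (d + 2),
          (K.filter fun σ => σ.card = i ∧ σ.image (ρ g) = σ).card *
            (if i ≤ m then (i + (m - i) - 1).choose (m - i) else 0) := by
  classical
  set Kg : Finset (Finset V) := K.filter (fun σ => σ.image (ρ g) = σ) with hKg
  set S : Finset (V → ℕ) := (Finset.piAntidiag Finset.univ m).filter
    (fun α => (Finset.univ.filter fun v => α v ≠ 0) ∈ K ∧ ∀ v, α (ρ g v) = α v) with hS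
  -- step 1 : Nat.card = S.card
  have h1 : Nat.card {α : V → ℕ // (∑ v, α v) = m ∧
      (Finset.univ.filter fun v => α v ≠ 0) ∈ K ∧ ∀ v, α (ρ g v) = α v} = S.card := by
    rw [Nat.card_congr (Equiv.subtypeEquivRight (q := fun α => α ∈ S) ?_),
      Nat.card_eq_fintype_card, Fintype.card_coe]
    intro α
    simp only [hS, Finset.mem_filter, Finset.mem_piAntidiag]
    constructor
    · rintro ⟨h1, h2, h3⟩; exact ⟨⟨h1, fun i _ => Finset.mem_univ i⟩, h2, h3⟩
    · rintro ⟨⟨h1, _⟩, h2, h3⟩; exact ⟨h1, h2, h3⟩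
  -- step 2 : fiber decomposition over Kg
  have h2 : S.card = ∑ σ ∈ Kg, (S.filter
      (fun α => (Finset.univ.filter fun v => α v ≠ 0) = σ)).card := by
    refine Finset.card_eq_sum_card_fiberwise ?_
    intro α hα
    rw [Finset.mem_coe] at hα ⊢
    simp only [hS, Finset.mem_filter] at hα
    obtain ⟨-, hK, hinv⟩ := hα
    refine Finset.mem_filter.2 ⟨hK, ?_⟩
    ext w
    simp only [Finset.mem_image, Finset.mem_filter, Finset.mem_univ, true_and]
    constructor
    · rintro ⟨v, hv, rfl⟩; rwa [hinv v]
    · intro hw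
      refine ⟨(ρ g)⁻¹ w, ?_, (ρ g).apply_symm_apply w⟩
      have := hinv ((ρ g)⁻¹ w)
      rw [show ρ g ((ρ g)⁻¹ w) = w from (ρ g).apply_symm_apply w] at this
      rwa [← this]
  -- step 3 : each fiber's cardinality
  have h3 : ∀ σ ∈ Kg, (S.filter
      (fun α => (Finset.univ.filter fun v => α v ≠ 0) = σ)).card
      = if σ.card ≤ m then (σ.card + (m - σ.card) - 1).choose (m - σ.card) else 0 := by
    intro σ hσ
    rw [hKg, Finset.mem_filter] at hσ
    obtain ⟨hσK, hσinv⟩ := hσ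
    have hT : S.filter (fun α => (Finset.univ.filter fun v => α v ≠ 0) = σ)
        = (Finset.piAntidiag Finset.univ m).filter
          (fun α => (Finset.univ.filter fun v => α v ≠ 0) = σ) := by
      ext α
      simp only [hS, Finset.mem_filter, Finset.mem_piAntidiag, and_assoc]
      constructor
      · rintro ⟨ha, hb, -, -, he⟩; exact ⟨ha, hb, he⟩
      · rintro ⟨ha, hb, hsupp⟩
        refine ⟨ha, hb, hsupp ▸ hσK, ?_, hsupp⟩
        intro v
        by_cases hv : v ∈ σ
        · rw [hproper g σ hσK hσinv v hv]
        · have hv0 : α v = 0 := by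
            by_contra h0
            exact hv (hsupp ▸ Finset.mem_filter.2 ⟨Finset.mem_univ v, h0⟩)
          have hgv : ρ g v ∉ σ := by
            intro hmem
            rw [← hσinv] at hmem
            obtain ⟨w, hw, hww⟩ := Finset.mem_image.1 hmem
            exact hv (((ρ g).injective hww) ▸ hw)
          have hgv0 : α (ρ g v) = 0 := by
            by_contra h0
            exact hgv (hsupp ▸ Finset.mem_filter.2 ⟨Finset.mem_univ _, h0⟩)
          rw [hv0, hgv0]
    rw [hT, ← hfib σ]
    rw [Nat.card_congr (Equiv.subtypeEquivRight (q := fun α =>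
        α ∈ (Finset.piAntidiag Finset.univ m).filter
          (fun α => (Finset.univ.filter fun v => α v ≠ 0) = σ)) ?_),
      Nat.card_eq_fintype_card, Fintype.card_coe]
    intro α
    simp only [Finset.mem_filter, Finset.mem_piAntidiag]
    constructor
    · rintro ⟨h1, h2⟩; exact ⟨⟨h1, fun i _ => Finset.mem_univ i⟩, h2⟩
    · rintro ⟨⟨h1, -⟩, h2⟩; exact ⟨h1, h2⟩
  -- step 4 : regroup by cardinality
  rw [h1, h2, Finset.sum_congr rfl h3]
  rw [← Finset.sum_fiberwise_of_maps_to (g := Finset.card) (t := Finset.range (d + 2)) ?_]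
  · refine Finset.sum_congr rfl ?_
    intro i _
    rw [Finset.sum_congr rfl (fun σ hσ => by
      rw [(Finset.mem_filter.1 hσ).2]), Finset.sum_const, smul_eq_mul]
    have : Kg.filter (fun σ => σ.card = i)
        = K.filter (fun σ => σ.card = i ∧ σ.image (ρ g) = σ) := by
      rw [hKg, Finset.filter_filter]
      ext τ
      simp only [Finset.mem_filter]
      tauto
    rw [this]
  · intro σ hσ
    rw [hKg, Finset.mem_filter] at hσ
    exact Finset.mem_range.2 (Nat.lt_succ_of_le (hdim σ hσ.1))

lemma aux_coeff (S : Type*) [CommRing S] (i m : ℕ) :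
    (PowerSeries.coeff (R := S) m) (PowerSeries.X ^ i * (PowerSeries.invOneSubPow S i).val)
      = ((if i ≤ m then (i + (m - i) - 1).choose (m - i) else 0 : ℕ) : S) := by
  rcases Nat.eq_zero_or_pos i with rfl | hi
  · rw [pow_zero, one_mul, PowerSeries.invOneSubPow_zero, Units.val_one,
      PowerSeries.coeff_one]
    rcases Nat.eq_zero_or_pos m with rfl | hm
    · simp
    · rw [if_neg (by omega), if_pos (by omega), Nat.choose_eq_zero_of_lt (by omega)]
      simp
  · rw [PowerSeries.invOneSubPow_val_eq_mk_sub_one_add_choose_of_pos _ _ hi,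
      PowerSeries.coeff_X_pow_mul']
    split_ifs with h
    · rw [PowerSeries.coeff_mk]
      congr 1
      have h1 : i - 1 + (m - i) = i + (m - i) - 1 := by omega
      rw [h1, ← Nat.choose_symm (by omega : i - 1 ≤ i + (m - i) - 1)]
      congr 1
      omega
    · simp

/-- For a proper action of a finite group on a `d`-dimensional complex, the equivariant
Hilbert series of the Stanley–Reisner ring equals `Σ_{i=0}^{d+1} f_{i-1} tⁱ/(1-t)ⁱ`,
stated after clearing denominators in `(G → ℂ)[[t]]` (characters of permutation
representations are encoded by their values, i.e. fixed-point counts). -/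
theorem stmt_10 {V : Type} [Fintype V] [DecidableEq V]
    {G : Type} [Group G] [Finite G] (ρ : G →* Equiv.Perm V)
    (K : Finset (Finset V)) (hempty : ∅ ∈ K)
    (hdown : ∀ σ ∈ K, ∀ τ ⊆ σ, τ ∈ K)
    (hact : ∀ (g : G), ∀ σ ∈ K, σ.image (ρ g) ∈ K)
    (hproper : ∀ (g : G), ∀ σ ∈ K, σ.image (ρ g) = σ → ∀ v ∈ σ, ρ g v = v)
    (d : ℕ) (hdim : ∀ σ ∈ K, σ.card ≤ d + 1) :
    (PowerSeries.mk fun m => fun g : G =>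
        ((Nat.card {α : V → ℕ // (∑ v, α v) = m ∧
            (Finset.univ.filter fun v => α v ≠ 0) ∈ K ∧
            ∀ v, α (ρ g v) = α v} : ℕ) : ℂ)) * (1 - PowerSeries.X) ^ (d + 1) =
      ∑ i ∈ Finset.range (d + 2),
        (PowerSeries.C
            (fun g : G =>
              ((K.filter fun σ => σ.card = i ∧ σ.image (ρ g) = σ).card : ℂ))) *
          PowerSeries.X ^ i * (1 - PowerSeries.X) ^ (d + 1 - i) := by
  classical
  have hH : (PowerSeries.mk fun m => fun g : G =>
        ((Nat.card {α : V → ℕ // (∑ v, α v) = m ∧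
            (Finset.univ.filter fun v => α v ≠ 0) ∈ K ∧
            ∀ v, α (ρ g v) = α v} : ℕ) : ℂ))
      = ∑ i ∈ Finset.range (d + 2),
          (PowerSeries.C
              (fun g : G =>
                ((K.filter fun σ => σ.card = i ∧ σ.image (ρ g) = σ).card : ℂ))) *
            (PowerSeries.X ^ i * (PowerSeries.invOneSubPow (G → ℂ) i).val) := by
    refine PowerSeries.ext fun m => ?_
    rw [PowerSeries.coeff_mk, map_sum]
    funext g
    have hc := aux_count ρ K hproper d hdim g m
      (fun σ => aux_fiber_card σ m (fun α _ _ k => aux_card_funSum α k))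
    rw [Finset.sum_apply]
    calc ((Nat.card {α : V → ℕ // (∑ v, α v) = m ∧
            (Finset.univ.filter fun v => α v ≠ 0) ∈ K ∧
            ∀ v, α (ρ g v) = α v} : ℕ) : ℂ)
        = ((∑ i ∈ Finset.range (d + 2),
            (K.filter fun σ => σ.card = i ∧ σ.image (ρ g) = σ).card *
              (if i ≤ m then (i + (m - i) - 1).choose (m - i) else 0) : ℕ) : ℂ) := by
          rw [hc]
      _ = ∑ i ∈ Finset.range (d + 2),
            ((K.filter fun σ => σ.card = i ∧ σ.image (ρ g) = σ).card : ℂ) *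
              (((if i ≤ m then (i + (m - i) - 1).choose (m - i) else 0 : ℕ)) : ℂ) := by
          push_cast
          rfl
      _ = _ := by
          refine Finset.sum_congr rfl ?_
          intro i _
          rw [PowerSeries.coeff_C_mul, Pi.mul_apply, aux_coeff, Pi.natCast_apply]
  rw [hH, Finset.sum_mul]
  refine Finset.sum_congr rfl ?_
  intro i hi
  have hi' : i ≤ d + 1 := by
    have := Finset.mem_range.1 hi
    omega
  have hpow : (1 - PowerSeries.X : PowerSeries (G → ℂ)) ^ (d + 1)
      = (1 - PowerSeries.X) ^ i * (1 - PowerSeries.X) ^ (d + 1 - i) := by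
    rw [← pow_add]
    congr 1
    omega
  have hunit : ((PowerSeries.invOneSubPow (G → ℂ) i).val : PowerSeries (G → ℂ)) *
      (1 - PowerSeries.X) ^ i = 1 := by
    rw [← PowerSeries.invOneSubPow_inv_eq_one_sub_pow]
    exact (PowerSeries.invOneSubPow (G → ℂ) i).val_inv
  rw [hpow, show ∀ c x v w y : PowerSeries (G → ℂ), c * (x * v) * (w * y) = c * x * y * (v * w) from
    fun c x v w y => by ring, hunit, mul_one]
end

section
/- For the 'radio-tower' poset X_k (the k-fold join of the 2-element antichain) with the action of G = (ℤ/2)^k where the i-th factor swaps the two elements a_i, b_i of the i-th level, and for any set S of odd ranks in {1,…,2k−1}, the rank-selected subposet J(X_k)_S is isomorphic to X_{|S|}, its order complex is the boundary of a |S|-dimensional cross-polytope (a sphere of dimension |S|−1), and the character of the G-representation on its top reduced homology equals the product ∏_{i∈S} sgn_{(i+1)/2}, where sgn_j is the sign character of the j-th ℤ/2 factor. -/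
/-- The `k`-fold join of the two-element antichain ("radio-tower" poset): elements are
pairs `(i, ε)` with `(i, ε) ≤ (j, δ)` iff `i < j` or `(i, ε) = (j, δ)`. -/
def RadioTower (k : ℕ) : Type := Fin k × Bool

instance {k : ℕ} : PartialOrder (RadioTower k) where
  le p q := p = q ∨ p.1 < q.1
  le_refl _ := Or.inl rfl
  le_trans p q r h h' := by
    rcases h with h | h
    · rwa [h]
    · rcases h' with h' | h'
      · rw [← h']; exact Or.inr h
      · exact Or.inr (h.trans h')
  le_antisymm p q h h' := by
    rcases h with h | h
    · exact h
    · rcases h' with h' | h'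
      · exact h'.symm
      · exact absurd (h.trans h') (lt_irrefl _)

instance {k : ℕ} : DecidableEq (RadioTower k) :=
  instDecidableEqProd (α := Fin k) (β := Bool)

/-- A lower order ideal of the radio-tower poset (as a finset). -/
def IsRTIdeal {k : ℕ} (I : Finset (RadioTower k)) : Prop :=
  ∀ p ∈ I, ∀ q : RadioTower k, q ≤ p → q ∈ I

/-- The action of `g ∈ (ℤ/2)^k` on the radio-tower poset, the `i`-th factor swapping
the two elements of level `i`. -/
def rtAct {k : ℕ} (g : Fin k → Bool) (p : RadioTower k) : RadioTower k :=
  (p.1, xor (g p.1) p.2)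

namespace RT17

open Finset

variable {k : ℕ}

instance : Fintype (RadioTower k) := inferInstanceAs (Fintype (Fin k × Bool))

lemma rt_le_def (p q : RadioTower k) : p ≤ q ↔ p = q ∨ p.1 < q.1 := Iff.rfl

def idl (j : Fin k) (ε : Bool) : Finset (RadioTower k) :=
  ((Finset.Iio j ×ˢ (Finset.univ : Finset Bool)) : Finset (Fin k × Bool)) ∪ {(j, ε)}

lemma mem_levelsBelow {j : Fin k} {p : RadioTower k} :
    p ∈ ((Finset.Iio j ×ˢ (Finset.univ : Finset Bool)) : Finset (Fin k × Bool)) ↔ p.1 < j := by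
  erw [Finset.mem_product, Finset.mem_Iio]; simp

lemma mem_idl {j : Fin k} {ε : Bool} {p : RadioTower k} :
    p ∈ idl j ε ↔ p.1 < j ∨ p = (j, ε) := by
  erw [idl, Finset.mem_union, mem_levelsBelow, Finset.mem_singleton]

lemma card_idl (j : Fin k) (ε : Bool) : (idl j ε).card = 2 * (j : ℕ) + 1 := by
  erw [idl, Finset.card_union_of_disjoint, Finset.card_product, Fin.card_Iio]
  · simp [mul_comm]; exact Finset.card_singleton _
  · simp [Finset.disjoint_singleton_right, Finset.mem_product]; exact Finset.disjoint_singleton_right.2 (fun h => lt_irrefl j (Finset.mem_Iio.1 (Finset.mem_product.1 h).1))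

lemma isIdeal_idl (j : Fin k) (ε : Bool) : IsRTIdeal (idl j ε) := by
  intro p hp q hq
  rcases hq with rfl | hq
  · exact hp
  · rcases mem_idl.1 hp with h | rfl
    · exact mem_idl.2 (Or.inl (hq.trans h))
    · exact mem_idl.2 (Or.inl hq)

lemma idl_subset_iff {j j' : Fin k} {ε ε' : Bool} :
    idl j ε ⊆ idl j' ε' ↔ j < j' ∨ (j = j' ∧ ε = ε') := by
  constructor
  · intro h
    have := mem_idl.1 (h (mem_idl.2 (Or.inr rfl)))
    rcases this with h1 | h1
    · exact Or.inl h1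
    · erw [Prod.ext_iff] at h1
      exact Or.inr h1
  · rintro (h | ⟨rfl, rfl⟩)
    · intro p hp
      rcases mem_idl.1 hp with h1 | rfl
      · exact mem_idl.2 (Or.inl (h1.trans h))
      · exact mem_idl.2 (Or.inl h)
    · exact subset_rfl

lemma idl_inj {j j' : Fin k} {ε ε' : Bool} (h : idl j ε = idl j' ε') :
    j = j' ∧ ε = ε' := by
  have h1 := idl_subset_iff.1 h.le
  have h2 := idl_subset_iff.1 h.ge
  rcases h1 with h1 | h1
  · rcases h2 with h2 | h2
    · exact absurd (h1.trans h2) (lt_irrefl _)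
    · exact absurd h1 (h2.1 ▸ lt_irrefl _)
  · exact h1

lemma ideal_classify {I : Finset (RadioTower k)} (hI : IsRTIdeal I) {j : ℕ}
    (hc : I.card = 2 * j + 1) : ∃ (hj : j < k) (ε : Bool), I = idl ⟨j, hj⟩ ε := by
  have hne : I.Nonempty := Finset.card_pos.1 (by omega)
  have hLne : (I.image Prod.fst).Nonempty := hne.image _
  set m : Fin k := (I.image Prod.fst).max' hLne with hm
  have hmax : ∀ p ∈ I, p.1 ≤ m := fun p hp =>
    Finset.le_max' _ _ (Finset.mem_image_of_mem _ hp)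
  obtain ⟨p₀, hp₀I, hp₀⟩ := Finset.mem_image.1 ((I.image Prod.fst).max'_mem hLne)
  set E : Finset (RadioTower k) := I.filter (fun p => p.1 = m) with hE
  have hIeq : I = ((Finset.Iio m ×ˢ (Finset.univ : Finset Bool)) : Finset (Fin k × Bool)) ∪ E := by
    ext p
    erw [Finset.mem_union, mem_levelsBelow, hE, Finset.mem_filter]
    constructor
    · intro hp
      rcases lt_or_eq_of_le (hmax p hp) with h | h
      · exact Or.inl h
      · exact Or.inr ⟨hp, h⟩
    · rintro (h | ⟨h, _⟩)
      · exact hI p₀ hp₀I p (Or.inr (by rw [hp₀]; exact h))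
      · exact h
  have hdisj : Disjoint ((Finset.Iio m ×ˢ (Finset.univ : Finset Bool)) : Finset (Fin k × Bool)) E := by
    erw [Finset.disjoint_left]
    rintro p hp hpe
    erw [hE, Finset.mem_filter] at hpe
    erw [mem_levelsBelow] at hp
    exact absurd hpe.2 (ne_of_lt hp)
  have hcard : I.card = 2 * (m : ℕ) + E.card := by
    erw [hIeq, Finset.card_union_of_disjoint hdisj, Finset.card_product, Fin.card_Iio]
    simp [mul_comm]; rfl
  have hEsub : E ⊆ {((m, true) : RadioTower k), (m, false)} := by
    intro p hp
    rw [hE, Finset.mem_filter] at hp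
    obtain ⟨a, b⟩ := p
    have h1 : a = m := hp.2
    subst h1
    erw [Finset.mem_insert, Finset.mem_singleton]
    cases b
    · exact Or.inr rfl
    · exact Or.inl rfl
  have hEle : E.card ≤ 2 := le_trans (Finset.card_le_card hEsub)
    ((Finset.card_insert_le _ _).trans (by simp; exact (Finset.card_singleton _).le))
  have hEpos : 0 < E.card := Finset.card_pos.2 ⟨p₀, by
    erw [hE, Finset.mem_filter]; exact ⟨hp₀I, hp₀⟩⟩
  have hE1 : E.card = 1 ∧ j = (m : ℕ) := by omega
  obtain ⟨e, he⟩ := Finset.card_eq_one.1 hE1.1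
  have heE : e ∈ E := he ▸ Finset.mem_singleton_self e
  have he1 : e.1 = m := (Finset.mem_filter.1 heE).2
  refine ⟨hE1.2 ▸ m.isLt, e.2, ?_⟩
  have : (⟨j, hE1.2 ▸ m.isLt⟩ : Fin k) = m := Fin.ext hE1.2
  have heq : e = ((m, e.2) : RadioTower k) := Prod.ext he1 rfl
  rw [this, hIeq, he, idl, ← heq]; rfl

lemma rtAct_fst {g : Fin k → Bool} (p : RadioTower k) : (rtAct g p).1 = p.1 := rfl

lemma rtAct_invol (g : Fin k → Bool) (p : RadioTower k) : rtAct g (rtAct g p) = p := by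
  obtain ⟨a, b⟩ := p
  show ((a, xor (g a) (xor (g a) b)) : RadioTower k) = (a, b)
  cases g a <;> cases b <;> rfl

lemma image_rtAct_idl (g : Fin k → Bool) (j : Fin k) (ε : Bool) :
    (idl j ε).image (rtAct g) = idl j (xor (g j) ε) := by
  ext p
  rw [Finset.mem_image]
  constructor
  · rintro ⟨q, hq, rfl⟩
    rcases mem_idl.1 hq with h | rfl
    · exact mem_idl.2 (Or.inl h)
    · exact mem_idl.2 (Or.inr rfl)
  · intro hp
    rcases mem_idl.1 hp with h | rfl
    · exact ⟨rtAct g p, mem_idl.2 (Or.inl h), rtAct_invol g p⟩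
    · exact ⟨(j, ε), mem_idl.2 (Or.inr rfl), rfl⟩

lemma count_lemma (g : Fin k → Bool) (T' : Finset (Fin k)) :
    Nat.card {c : Finset (Finset (RadioTower k)) //
        (∀ I ∈ c, IsRTIdeal I) ∧
        IsChain (· ⊆ ·) (c : Set (Finset (RadioTower k))) ∧
        c.image Finset.card = T'.image (fun j : Fin k => 2 * (j : ℕ) + 1) ∧
        c.image (fun I => I.image (rtAct g)) = c} =
      if ∀ j ∈ T', g j = false then 2 ^ T'.card else 0 := by
  by_cases hg : ∀ j ∈ T', g j = false
  · rw [if_pos hg]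
    set Φ : ({j // j ∈ T'} → Bool) → Finset (Finset (RadioTower k)) :=
      fun ε => T'.attach.image (fun j => idl j.1 (ε j)) with hΦ
    have hmem : ∀ (ε : {j // j ∈ T'} → Bool) (I : Finset (RadioTower k)),
        I ∈ Φ ε ↔ ∃ a : {j // j ∈ T'}, I = idl a.1 (ε a) := by
      intro ε I
      rw [hΦ, Finset.mem_image]
      constructor
      · rintro ⟨a, _, rfl⟩; exact ⟨a, rfl⟩
      · rintro ⟨a, rfl⟩; exact ⟨a, Finset.mem_attach _ _, rfl⟩
    have hΦprop : ∀ ε : {j // j ∈ T'} → Bool,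
        (∀ I ∈ Φ ε, IsRTIdeal I) ∧
        IsChain (· ⊆ ·) ((Φ ε : Finset (Finset (RadioTower k))) : Set (Finset (RadioTower k))) ∧
        (Φ ε).image Finset.card = T'.image (fun j : Fin k => 2 * (j : ℕ) + 1) ∧
        (Φ ε).image (fun I => I.image (rtAct g)) = Φ ε := by
      intro ε
      refine ⟨?_, ?_, ?_, ?_⟩
      · intro I hI
        obtain ⟨a, rfl⟩ := (hmem ε I).1 hI
        exact isIdeal_idl _ _
      · intro I hI J hJ hne
        obtain ⟨a, rfl⟩ := (hmem ε I).1 hI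
        obtain ⟨b, rfl⟩ := (hmem ε J).1 hJ
        have hab : a.1 ≠ b.1 := by
          rintro h
          have : a = b := Subtype.ext h
          exact hne (by rw [this])
        rcases lt_or_gt_of_ne hab with h | h
        · exact Or.inl (idl_subset_iff.2 (Or.inl h))
        · exact Or.inr (idl_subset_iff.2 (Or.inl h))
      · rw [hΦ, Finset.image_image]
        have : T'.image (fun j : Fin k => 2 * (j : ℕ) + 1) =
            T'.attach.image (fun a => 2 * (a.1 : ℕ) + 1) := by
          conv_lhs => rw [← Finset.attach_image_val (s := T')]
          rw [Finset.image_image]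
          rfl
        rw [this]
        exact Finset.image_congr (fun a _ => card_idl a.1 (ε a))
      · rw [hΦ, Finset.image_image]
        refine Finset.image_congr ?_
        intro a _
        show (idl a.1 (ε a)).image (rtAct g) = idl a.1 (ε a)
        rw [image_rtAct_idl, hg a.1 a.2, Bool.false_xor]
    have hinj : Function.Injective Φ := by
      intro ε ε' h
      funext a
      have h1 : idl a.1 (ε a) ∈ Φ ε' := by rw [← h]; exact (hmem ε _).2 ⟨a, rfl⟩
      obtain ⟨b, hb⟩ := (hmem ε' _).1 h1
      obtain ⟨h2, h3⟩ := idl_inj hb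
      have hab : a = b := Subtype.ext h2
      cases hab
      exact h3
    have hNat : Nat.card {c : Finset (Finset (RadioTower k)) //
        (∀ I ∈ c, IsRTIdeal I) ∧
        IsChain (· ⊆ ·) (c : Set (Finset (RadioTower k))) ∧
        c.image Finset.card = T'.image (fun j : Fin k => 2 * (j : ℕ) + 1) ∧
        c.image (fun I => I.image (rtAct g)) = c} = Nat.card ({j // j ∈ T'} → Bool) := by
      refine Nat.card_congr (Equiv.symm (Equiv.ofBijective
        (fun ε => ⟨Φ ε, hΦprop ε⟩) ⟨?_, ?_⟩))
      · intro ε ε' h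
        exact hinj (congrArg Subtype.val h)
      · rintro ⟨c, h1, h2, h3, h4⟩
        have key : ∀ a : {j // j ∈ T'}, ∃ ε : Bool, idl a.1 ε ∈ c := by
          intro a
          have : 2 * (a.1 : ℕ) + 1 ∈ c.image Finset.card := by
            rw [h3]; exact Finset.mem_image_of_mem _ a.2
          obtain ⟨I, hI, hcard⟩ := Finset.mem_image.1 this
          obtain ⟨hj, ε, hIe⟩ := ideal_classify (h1 I hI) hcard
          have : (⟨(a.1 : ℕ), hj⟩ : Fin k) = a.1 := Fin.ext rfl
          exact ⟨ε, by rw [← this, ← hIe]; exact hI⟩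
        choose ε hε using key
        refine ⟨ε, ?_⟩
        refine Subtype.ext ?_
        show Φ ε = c
        apply Finset.Subset.antisymm
        · intro I hI
          obtain ⟨a, rfl⟩ := (hmem ε I).1 hI
          exact hε a
        · intro I hI
          have : I.card ∈ T'.image (fun j : Fin k => 2 * (j : ℕ) + 1) := by
            rw [← h3]; exact Finset.mem_image_of_mem _ hI
          obtain ⟨j, hjT, hjc⟩ := Finset.mem_image.1 this
          obtain ⟨hj, ε', hIe⟩ := ideal_classify (h1 I hI) hjc.symm
          have hfin : (⟨(j : ℕ), hj⟩ : Fin k) = j := Fin.ext rfl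
          rw [hfin] at hIe
          have hIc : idl j (ε ⟨j, hjT⟩) ∈ c := hε ⟨j, hjT⟩
          have hIeq : I = idl j (ε ⟨j, hjT⟩) := by
            by_cases heq : I = idl j (ε ⟨j, hjT⟩)
            · exact heq
            · rcases h2 hI hIc heq with h | h
              · exact Finset.eq_of_subset_of_card_le h (by rw [card_idl, ← hjc])
              · exact (Finset.eq_of_subset_of_card_le h (by rw [card_idl, ← hjc])).symm
          rw [hIeq]
          exact (hmem ε _).2 ⟨⟨j, hjT⟩, rfl⟩
    rw [hNat, Nat.card_fun, Nat.card_eq_fintype_card (α := Bool),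
      Nat.card_eq_fintype_card, Fintype.card_coe]
    rfl
  · rw [if_neg hg]
    push_neg at hg
    obtain ⟨j, hjT, hgj⟩ := hg
    have hgj' : g j = true := by simpa using hgj
    rw [Nat.card_eq_zero]
    left
    constructor
    rintro ⟨c, h1, h2, h3, h4⟩
    have : 2 * (j : ℕ) + 1 ∈ c.image Finset.card := by
      rw [h3]; exact Finset.mem_image_of_mem _ hjT
    obtain ⟨I, hI, hcard⟩ := Finset.mem_image.1 this
    obtain ⟨hj, ε, rfl⟩ := ideal_classify (h1 I hI) hcard
    have hfin : (⟨(j : ℕ), hj⟩ : Fin k) = j := Fin.ext rfl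
    rw [hfin] at hI
    have hI' : (idl j ε).image (rtAct g) ∈ c := by
      rw [← h4]; exact Finset.mem_image_of_mem _ hI
    rw [image_rtAct_idl, hgj'] at hI'
    have hne : idl j ε ≠ idl j (xor true ε) := by
      intro h
      have := (idl_inj h).2
      cases ε <;> simp at this
    rcases h2 hI hI' hne with h | h
    · rcases idl_subset_iff.1 h with h' | h'
      · exact absurd h' (lt_irrefl _)
      · exact hne (congrArg _ h'.2)
    · rcases idl_subset_iff.1 h with h' | h'
      · exact absurd h' (lt_irrefl _)
      · exact hne (congrArg _ h'.2.symm)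

lemma chain_iff (m : ℕ) (σ : Finset (RadioTower m)) :
    IsChain (· ≤ ·) (σ : Set (RadioTower m)) ↔
      ∀ i : Fin m, ¬(((i, true) : RadioTower m) ∈ σ ∧ ((i, false) : RadioTower m) ∈ σ) := by
  constructor
  · rintro h i ⟨ht, hf⟩
    have hne : ((i, true) : RadioTower m) ≠ ((i, false) : RadioTower m) := by
      intro h'
      exact Bool.noConfusion (congrArg Prod.snd h')
    rcases h (Finset.mem_coe.2 ht) (Finset.mem_coe.2 hf) hne with h' | h'
    · rcases h' with h' | h'
      · exact hne h'
      · exact lt_irrefl _ h'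
    · rcases h' with h' | h'
      · exact hne h'.symm
      · exact lt_irrefl _ h'
  · intro h p hp q hq hne
    rw [Finset.mem_coe] at hp hq
    obtain ⟨a, ε⟩ := p
    obtain ⟨b, δ⟩ := q
    rcases lt_trichotomy a b with hab | rfl | hab
    · exact Or.inl (Or.inr hab)
    · exfalso
      cases ε <;> cases δ
      · exact hne rfl
      · exact h a ⟨hq, hp⟩
      · exact h a ⟨hp, hq⟩
      · exact hne rfl
    · exact Or.inr (Or.inr hab)

lemma part_i (T : Finset (Fin k)) :
    Nonempty
      ({I : Finset (RadioTower k) //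
          IsRTIdeal I ∧ I.card ∈ T.image fun j : Fin k => 2 * (j : ℕ) + 1} ≃o
        RadioTower T.card) := by
  set o := T.orderIsoOfFin rfl with ho
  set toFun : RadioTower T.card →
      {I : Finset (RadioTower k) //
        IsRTIdeal I ∧ I.card ∈ T.image fun j : Fin k => 2 * (j : ℕ) + 1} :=
    fun p => ⟨idl (o p.1 : Fin k) p.2, isIdeal_idl _ _, by
      rw [card_idl]
      exact Finset.mem_image_of_mem _ (o p.1).2⟩ with htoFun
  have hbij : Function.Bijective toFun := by
    constructor
    · intro a b hab
      have h := congrArg Subtype.val hab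
      obtain ⟨h1, h2⟩ := idl_inj h
      have h3 : o a.1 = o b.1 := Subtype.ext h1
      exact Prod.ext (o.injective h3) h2
    · rintro ⟨I, hId, hc⟩
      obtain ⟨j, hjT, hjc⟩ := Finset.mem_image.1 hc
      obtain ⟨hj, ε, hIe⟩ := ideal_classify hId hjc.symm
      have hfin : (⟨(j : ℕ), hj⟩ : Fin k) = j := Fin.ext rfl
      rw [hfin] at hIe
      refine ⟨(o.symm ⟨j, hjT⟩, ε), ?_⟩
      refine Subtype.ext ?_
      show idl (o (o.symm ⟨j, hjT⟩) : Fin k) ε = I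
      rw [o.apply_symm_apply, hIe]
  set e := Equiv.ofBijective toFun hbij with he
  have hrel : ∀ a b : RadioTower T.card, e a ≤ e b ↔ a ≤ b := by
    intro a b
    have hlhs : (e a ≤ e b) ↔ idl (o a.1 : Fin k) a.2 ⊆ idl (o b.1 : Fin k) b.2 := by
      rw [he]
      exact Iff.rfl
    erw [hlhs, idl_subset_iff, rt_le_def, Prod.ext_iff]
    constructor
    · rintro (h | ⟨h1, h2⟩)
      · exact Or.inr (o.lt_iff_lt.1 (Subtype.coe_lt_coe.1 h))
      · exact Or.inl ⟨o.injective (Subtype.coe_injective h1), h2⟩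
    · rintro (⟨h1, h2⟩ | h)
      · exact Or.inr ⟨congrArg (fun x => ((o x : {x // x ∈ T}) : Fin k)) h1, h2⟩
      · exact Or.inl (Subtype.coe_lt_coe.2 (o.lt_iff_lt.2 h))
  exact ⟨({ toEquiv := e, map_rel_iff' := fun {a b} => hrel a b } : _ ≃o _).symm⟩

end RT17

/-- For the radio-tower poset `X_k` with the `(ℤ/2)^k`-action, and any set `T` of levels
(corresponding to the set `S = {2j+1 : j ∈ T}` of odd ranks):
(i) the rank-selected subposet `J(X_k)_S` is order-isomorphic to `X_{|T|}`;
(ii) the order complex of `X_m` is the boundary of the `m`-dimensional cross-polytope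
(chains are exactly the subsets containing no antipodal pair);
(iii) the equivariant flag `h`-character of the selection, which equals the character of
the representation on the top reduced homology, is `∏_{j ∈ T} sgn_j`. -/
theorem stmt_17 (k : ℕ) (T : Finset (Fin k)) :
    -- (i) rank-selected subposet is isomorphic to the radio tower on |T| levels
    Nonempty
      ({I : Finset (RadioTower k) //
          IsRTIdeal I ∧ I.card ∈ T.image fun j : Fin k => 2 * (j : ℕ) + 1} ≃o
        RadioTower T.card) ∧
    -- (ii) chains of `X_m` = faces of the boundary of the cross-polytope
    (∀ (m : ℕ) (σ : Finset (RadioTower m)),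
      IsChain (· ≤ ·) (σ : Set (RadioTower m)) ↔
        ∀ i : Fin m, ¬(((i, true) : RadioTower m) ∈ σ ∧ ((i, false) : RadioTower m) ∈ σ)) ∧
    -- (iii) the flag h-character equals the product of the sign characters
    (∀ g : Fin k → Bool,
      ∑ R ∈ (T.image fun j : Fin k => 2 * (j : ℕ) + 1).powerset,
        (-1 : ℤ) ^ ((T.image fun j : Fin k => 2 * (j : ℕ) + 1).card - R.card) *
          (Nat.card {c : Finset (Finset (RadioTower k)) //
              (∀ I ∈ c, IsRTIdeal I) ∧
              IsChain (· ⊆ ·) (c : Set (Finset (RadioTower k))) ∧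
              c.image Finset.card = R ∧
              c.image (fun I => I.image (rtAct g)) = c} : ℤ) =
        ∏ j ∈ T, (if g j then (-1 : ℤ) else 1)) := by
  refine ⟨RT17.part_i T, RT17.chain_iff, ?_⟩
  intro g
  set f : Fin k → ℕ := fun j => 2 * (j : ℕ) + 1 with hf
  have finj : Function.Injective f := by
    intro a b h
    simp only [hf] at h
    exact Fin.val_injective (by omega)
  have hpow : (T.image f).powerset = (T.powerset).image (fun t => t.image f) := by
    ext R
    simp only [Finset.mem_powerset, Finset.mem_image]
    constructor
    · intro hR
      refine ⟨T.filter (fun j => f j ∈ R), Finset.filter_subset _ _, ?_⟩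
      ext n
      rw [Finset.mem_image]
      constructor
      · rintro ⟨j, hj, rfl⟩
        exact (Finset.mem_filter.1 hj).2
      · intro hn
        obtain ⟨j, hjT, hjn⟩ := Finset.mem_image.1 (hR hn)
        exact ⟨j, Finset.mem_filter.2 ⟨hjT, hjn.symm ▸ hn⟩, hjn⟩
    · rintro ⟨t, ht, rfl⟩
      exact Finset.image_subset_image ht
  rw [hpow, Finset.sum_image (fun x _ y _ h => Finset.image_injective finj h)]
  have hTcard : (T.image f).card = T.card := Finset.card_image_of_injective T finj
  have hterm : ∀ t ∈ T.powerset,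
      (-1 : ℤ) ^ ((T.image f).card - (t.image f).card) *
        (Nat.card {c : Finset (Finset (RadioTower k)) //
            (∀ I ∈ c, IsRTIdeal I) ∧
            IsChain (· ⊆ ·) (c : Set (Finset (RadioTower k))) ∧
            c.image Finset.card = t.image f ∧
            c.image (fun I => I.image (rtAct g)) = c} : ℤ) =
      (-1 : ℤ) ^ (T.card - t.card) *
        (if ∀ j ∈ t, g j = false then (2 : ℤ) ^ t.card else 0) := by
    intro t _
    rw [RT17.count_lemma g t, hTcard, Finset.card_image_of_injective t finj]
    split_ifs
    · push_cast
      ring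
    · simp
  rw [Finset.sum_congr rfl hterm]
  set T₀ := T.filter (fun j => g j = false) with hT₀
  have hsub : T₀.powerset ⊆ T.powerset := Finset.powerset_mono.2 (Finset.filter_subset _ _)
  have hzero : ∀ t ∈ T.powerset, t ∉ T₀.powerset →
      (-1 : ℤ) ^ (T.card - t.card) *
        (if ∀ j ∈ t, g j = false then (2 : ℤ) ^ t.card else 0) = 0 := by
    intro t htT ht0
    rw [Finset.mem_powerset] at htT ht0
    have : ¬ ∀ j ∈ t, g j = false := by
      intro hall
      exact ht0 (fun j hj => Finset.mem_filter.2 ⟨htT hj, hall j hj⟩)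
    rw [if_neg this, mul_zero]
  rw [← Finset.sum_subset hsub hzero]
  have hcond : ∀ t ∈ T₀.powerset, ∀ j ∈ t, g j = false := by
    intro t ht j hj
    exact (Finset.mem_filter.1 ((Finset.mem_powerset.1 ht) hj)).2
  have hT₀T : T₀.card ≤ T.card := Finset.card_le_card (Finset.filter_subset _ _)
  have hsum2 : ∑ t ∈ T₀.powerset,
      (-1 : ℤ) ^ (T.card - t.card) *
        (if ∀ j ∈ t, g j = false then (2 : ℤ) ^ t.card else 0) =
      (-1 : ℤ) ^ (T.card - T₀.card) *
        ∑ t ∈ T₀.powerset, (-1 : ℤ) ^ (T₀.card - t.card) * (2 : ℤ) ^ t.card := by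
    rw [Finset.mul_sum]
    refine Finset.sum_congr rfl ?_
    intro t ht
    rw [if_pos (hcond t ht)]
    have hc : t.card ≤ T₀.card := Finset.card_le_card (Finset.mem_powerset.1 ht)
    have : T.card - t.card = (T.card - T₀.card) + (T₀.card - t.card) := by omega
    rw [this, pow_add, mul_assoc]
  rw [hsum2]
  have hinner : ∑ t ∈ T₀.powerset, (-1 : ℤ) ^ (T₀.card - t.card) * (2 : ℤ) ^ t.card = 1 := by
    rw [Finset.sum_powerset_apply_card (fun r => (-1 : ℤ) ^ (T₀.card - r) * (2 : ℤ) ^ r)]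
    have h1 := add_pow (2 : ℤ) (-1) T₀.card
    have h2 : ∑ m ∈ Finset.range (T₀.card + 1),
        T₀.card.choose m • ((-1 : ℤ) ^ (T₀.card - m) * (2 : ℤ) ^ m) =
        ((2 : ℤ) + (-1)) ^ T₀.card := by
      rw [h1]
      refine Finset.sum_congr rfl ?_
      intro m _
      rw [nsmul_eq_mul]
      ring
    rw [h2]
    norm_num
  rw [hinner, mul_one]
  rw [← Finset.prod_filter_mul_prod_filter_not T (fun j => g j = false)]
  have hp1 : ∏ j ∈ T.filter (fun j => g j = false), (if g j then (-1 : ℤ) else 1) = 1 := by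
    refine Finset.prod_eq_one ?_
    intro j hj
    rw [(Finset.mem_filter.1 hj).2]
    rfl
  have hp2 : ∏ j ∈ T.filter (fun j => ¬ g j = false), (if g j then (-1 : ℤ) else 1) =
      (-1 : ℤ) ^ (T.card - T₀.card) := by
    have hcardeq : (T.filter (fun j => ¬ g j = false)).card = T.card - T₀.card := by
      have h1 := Finset.card_filter_add_card_filter_not (s := T)
        (p := fun j => g j = false)
      have h2 : T₀.card = (Finset.filter (fun j => g j = false) T).card := rfl
      omega
    rw [← hcardeq, ← Finset.prod_const]
    refine Finset.prod_congr rfl ?_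
    intro j hj
    have : g j = true := by
      have := (Finset.mem_filter.1 hj).2
      simpa using this
    rw [this]
    rfl
  rw [hp1, hp2, one_mul]
end

section
/- The equivariant Ehrhart series of the order polytope O(X_k) of the radio-tower poset X_k with respect to the coordinate-permutation action of G = (ℤ/2)^k equals ∏_{j=1}^{k}(1 + sgn_j t) / (1−t)^{2k+1} in R(G)[[t]], where sgn_j is the sign character of the j-th ℤ/2 factor. -/
namespace Stmt18

lemma rt_le_def {k : ℕ} (p q : RadioTower k) : p ≤ q ↔ p = q ∨ p.1 < q.1 := Iff.rfl

def SType (k m : ℕ) (g : Fin k → Bool) : Type :=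
  {f : RadioTower k → ℤ //
    (∀ p q : RadioTower k, p ≤ q → 0 ≤ f p ∧ f p ≤ f q ∧ f q ≤ (m : ℤ)) ∧
    ∀ p, f (rtAct g p) = f p}

instance {k : ℕ} : Finite (RadioTower k) := by unfold RadioTower; infer_instance

instance {k m : ℕ} {g : Fin k → Bool} : Finite (SType k m g) := by
  classical
  let F : SType k m g → (RadioTower k → Set.Icc (0:ℤ) m) := fun f p =>
    ⟨f.1 p, ⟨(f.2.1 p p le_rfl).1, (f.2.1 p p le_rfl).2.2⟩⟩
  have hF : Function.Injective F := by
    intro a b h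
    apply Subtype.ext; funext p
    exact congrArg Subtype.val (congrFun h p)
  exact Finite.of_injective F hF

lemma card_zero (m : ℕ) (g : Fin 0 → Bool) : Nat.card (SType 0 m g) = 1 := by
  have h1 : ∀ x y : SType 0 m g, x = y := by
    intro x y; apply Subtype.ext; funext p; exact p.1.elim0
  have : Subsingleton (SType 0 m g) := ⟨h1⟩
  have : Nonempty (SType 0 m g) :=
    ⟨⟨fun p => p.1.elim0, ⟨fun p _ _ => p.1.elim0, fun p => p.1.elim0⟩⟩⟩
  exact Nat.card_unique

def TType (m : ℕ) (b : Bool) (s : ℤ) : Type :=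
  {uv : ℤ × ℤ // min uv.1 uv.2 = s ∧ uv.1 ≤ m ∧ uv.2 ≤ m ∧ (b = true → uv.1 = uv.2)}

lemma card_T_true (m : ℕ) (s : ℤ) (h0 : s ≤ m) : Nat.card (TType m true s) = 1 := by
  have : Subsingleton (TType m true s) := by
    constructor
    intro ⟨⟨u, v⟩, h⟩ ⟨⟨u', v'⟩, h'⟩
    have := h.2.2.2 rfl
    have := h'.2.2.2 rfl
    have h1 := h.1
    have h2 := h'.1
    apply Subtype.ext
    simp only [Prod.mk.injEq]
    constructor <;> omega
  have : Nonempty (TType m true s) := ⟨⟨(s, s), by simp; omega⟩⟩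
  exact Nat.card_unique

lemma card_T_false (m s : ℕ) (hs : s ≤ m) :
    Nat.card (TType m false (s : ℤ)) = 2 * (m - s) + 1 := by
  have e : TType m false (s : ℤ) ≃ {x : ℤ // x ∈ Finset.Icc (-((m:ℤ) - s)) ((m:ℤ) - s)} := by
    refine ⟨fun uv => ⟨uv.1.1 - uv.1.2, ?_⟩,
      fun x => ⟨((s:ℤ) + max x.1 0, (s:ℤ) + max (-x.1) 0), ?_, ?_, ?_, by simp⟩, ?_, ?_⟩
    · obtain ⟨⟨u, v⟩, h1, h2, h3, -⟩ := uv
      simp only [Finset.mem_Icc]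
      omega
    · have hx := x.2
      simp only [Finset.mem_Icc] at hx
      simp only
      omega
    · have hx := x.2
      simp only [Finset.mem_Icc] at hx
      simp only
      omega
    · have hx := x.2
      simp only [Finset.mem_Icc] at hx
      simp only
      omega
    · intro uv
      obtain ⟨⟨u, v⟩, h1, h2, h3, -⟩ := uv
      apply Subtype.ext
      simp only [Prod.mk.injEq]
      constructor <;> omega
    · intro x
      have hx := x.2
      simp only [Finset.mem_Icc] at hx
      apply Subtype.ext
      simp only
      omega
  rw [Nat.card_congr e, Nat.card_eq_finsetCard, Int.card_Icc]
  omega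

end Stmt18

namespace Stmt18

def cnt (b : Bool) (r : ℕ) : ℤ := if b then 1 else 2*(r:ℤ)+1

variable {k m : ℕ} {g : Fin (k+1) → Bool}

/-- the "min of the top level" statistic -/
def sig (x : SType (k+1) m g) : ℕ :=
  (min (x.1 (Fin.last k, false)) (x.1 (Fin.last k, true))).toNat

def fiberEquiv (k m : ℕ) (g : Fin (k+1) → Bool) (s : ℕ) (hs : s ≤ m) :
    {x : SType (k+1) m g // sig x = s} ≃
      SType k s (fun j => g j.castSucc) × TType m (g (Fin.last k)) (s : ℤ) where
  toFun x := by
    obtain ⟨⟨f, hmono, hfix⟩, hx⟩ := x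
    have hu := hmono (Fin.last k, false) (Fin.last k, false) le_rfl
    have hv := hmono (Fin.last k, true) (Fin.last k, true) le_rfl
    have hmin : min (f (Fin.last k, false)) (f (Fin.last k, true)) = (s : ℤ) := by
      simp only [sig] at hx; omega
    have hups : ∀ q : RadioTower k, f (q.1.castSucc, q.2) ≤ (s : ℤ) := by
      intro q
      have h1 := (hmono (q.1.castSucc, q.2) (Fin.last k, false)
        (Or.inr (Fin.castSucc_lt_last q.1))).2.1
      have h2 := (hmono (q.1.castSucc, q.2) (Fin.last k, true)
        (Or.inr (Fin.castSucc_lt_last q.1))).2.1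
      omega
    refine ⟨⟨fun p => f (p.1.castSucc, p.2), ?_, ?_⟩,
      ⟨(f (Fin.last k, false), f (Fin.last k, true)), hmin, hu.2.2, hv.2.2, ?_⟩⟩
    · intro p q hpq
      rcases (rt_le_def p q).1 hpq with h | h
      · subst h
        exact ⟨(hmono _ _ le_rfl).1, le_rfl, hups p⟩
      · refine ⟨(hmono _ _ le_rfl).1, ?_, hups q⟩
        exact (hmono (p.1.castSucc, p.2) (q.1.castSucc, q.2)
          (Or.inr (by rwa [Fin.castSucc_lt_castSucc_iff]))).2.1
    · intro p
      exact hfix (p.1.castSucc, p.2)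
    · intro hb
      have h := hfix (Fin.last k, false)
      simp only [rtAct, hb, Bool.xor_false] at h
      exact h.symm
  invFun yt := by
    obtain ⟨⟨y, hymono, hyfix⟩, ⟨⟨u, v⟩, hmin, hum, hvm, himp⟩⟩ := yt
    dsimp only at hmin hum hvm himp
    refine ⟨⟨fun p => if h : p.1 = Fin.last k then (if p.2 then v else u)
      else y (p.1.castPred h, p.2), ?_, ?_⟩, ?_⟩
    · have hbnd : ∀ p : RadioTower (k+1), 0 ≤ (if h : p.1 = Fin.last k
          then (if p.2 then v else u) else y (p.1.castPred h, p.2)) ∧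
          (if h : p.1 = Fin.last k then (if p.2 then v else u)
            else y (p.1.castPred h, p.2)) ≤ (m : ℤ) := by
        intro p
        by_cases h : p.1 = Fin.last k
        · simp only [dif_pos h]
          cases p.2 <;> simp <;> omega
        · simp only [dif_neg h]
          have := hymono (p.1.castPred h, p.2) (p.1.castPred h, p.2) (Or.inl rfl)
          omega
      intro p q hpq
      rcases (rt_le_def p q).1 hpq with h | h
      · subst h
        exact ⟨(hbnd p).1, le_rfl, (hbnd p).2⟩
      · refine ⟨(hbnd p).1, ?_, (hbnd q).2⟩
        have hp : p.1 ≠ Fin.last k := Fin.ne_last_of_lt h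
        simp only [dif_neg hp]
        by_cases hq : q.1 = Fin.last k
        · simp only [dif_pos hq]
          have h1 := (hymono (p.1.castPred hp, p.2) (p.1.castPred hp, p.2) (Or.inl rfl)).2.2
          cases q.2 <;> simp <;> omega
        · simp only [dif_neg hq]
          refine (hymono (p.1.castPred hp, p.2) (q.1.castPred hq, q.2) (Or.inr ?_)).2.1
          simp only [Fin.lt_def, Fin.coe_castPred]
          exact h
    · intro p
      obtain ⟨i, c⟩ := p
      by_cases h : i = Fin.last k
      · subst h
        have e1 : rtAct g (Fin.last k, c) = (Fin.last k, xor (g (Fin.last k)) c) := rfl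
        rw [e1]
        dsimp only
        rw [dif_pos rfl, dif_pos rfl]
        cases hgl : g (Fin.last k)
        · simp
        · have huv := himp hgl
          cases c <;> simp [huv]
      · have e1 : rtAct g (i, c) = (i, xor (g i) c) := rfl
        rw [e1]
        dsimp only
        rw [dif_neg h, dif_neg h]
        have h2 := hyfix (i.castPred h, c)
        have e2 : rtAct (fun j => g j.castSucc) (i.castPred h, c)
            = (i.castPred h, xor (g i) c) := by
          simp [rtAct, Fin.castSucc_castPred]; rfl
        rw [e2] at h2
        exact h2
    · dsimp only [sig]
      rw [dif_pos rfl, dif_pos rfl]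
      simp only [if_false, if_true, Bool.false_eq_true]
      omega
  left_inv := by
    intro x
    apply Subtype.ext
    apply Subtype.ext
    funext p
    obtain ⟨i, c⟩ := p
    obtain ⟨⟨f, hmono, hfix⟩, hx⟩ := x
    by_cases h : i = Fin.last k
    · subst h
      show dite _ _ _ = _
      rw [dif_pos rfl]
      cases c <;> rfl
    · show dite _ _ _ = _
      rw [dif_neg h]
      show f ((i.castPred h).castSucc, c) = f (i, c)
      rw [Fin.castSucc_castPred]
  right_inv := by
    intro yt
    obtain ⟨⟨y, hymono, hyfix⟩, ⟨⟨u, v⟩, hmin, hum, hvm, himp⟩⟩ := yt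
    dsimp only at hmin hum hvm himp
    refine Prod.ext ?_ ?_
    · apply Subtype.ext
      funext p
      obtain ⟨j, c⟩ := p
      show dite _ _ _ = _
      rw [dif_neg (Fin.castSucc_lt_last j).ne]
      rw [Fin.castPred_castSucc]
    · apply Subtype.ext
      show (dite _ _ _, dite _ _ _) = (u, v)
      rw [dif_pos rfl, dif_pos rfl]
      simp

lemma card_succ (k m : ℕ) (g : Fin (k+1) → Bool) :
    (Nat.card (SType (k+1) m g) : ℤ) =
    ∑ s ∈ Finset.range (m+1),
      (Nat.card (SType k s (fun j => g j.castSucc)) : ℤ) * cnt (g (Fin.last k)) (m - s) := by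
  classical
  letI : Fintype (SType (k+1) m g) := Fintype.ofFinite _
  have hσ : ∀ x : SType (k+1) m g, sig x ∈ Finset.range (m+1) := by
    intro x
    obtain ⟨f, hmono, hfix⟩ := x
    have hu := hmono (Fin.last k, false) (Fin.last k, false) le_rfl
    have hv := hmono (Fin.last k, true) (Fin.last k, true) le_rfl
    simp only [sig, Finset.mem_range]
    omega
  rw [Nat.card_eq_fintype_card, ← Finset.card_univ,
    Finset.card_eq_sum_card_fiberwise (fun x _ => hσ x), Nat.cast_sum]
  refine Finset.sum_congr rfl ?_
  intro s hs
  have hsm : s ≤ m := by simpa [Nat.lt_succ_iff] using hs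
  rw [← Fintype.card_subtype, ← Nat.card_eq_fintype_card,
    Nat.card_congr (fiberEquiv k m g s hsm), Nat.card_prod]
  cases hb : g (Fin.last k)
  · rw [card_T_false m s hsm]
    simp only [cnt, Bool.false_eq_true, if_false]
    push_cast
    omega
  · rw [card_T_true m s (by exact_mod_cast hsm)]
    simp [cnt]

end Stmt18

namespace Stmt18

open PowerSeries

lemma geom_inv : (PowerSeries.mk fun _ => (1:ℤ)) * (1 - PowerSeries.X) = 1 := by
  ext n
  rw [mul_sub, mul_one, map_sub]
  cases n with
  | zero => simp
  | succ n => simp [PowerSeries.coeff_succ_mul_X, PowerSeries.coeff_mk]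

lemma mk_one_sq : (PowerSeries.mk fun _ => (1:ℤ)) * (PowerSeries.mk fun _ => (1:ℤ))
    = PowerSeries.mk fun r => ((r:ℤ) + 1) := by
  ext n
  rw [PowerSeries.coeff_mul]
  simp [Finset.Nat.card_antidiagonal]

lemma odd_mul : (PowerSeries.mk fun r => (2*(r:ℤ)+1)) * (1 - PowerSeries.X)^2
    = 1 + PowerSeries.X := by
  have h2 : (PowerSeries.mk fun r => (2*(r:ℤ)+1))
      = PowerSeries.C (R := ℤ) 2 * ((PowerSeries.mk fun _ => (1:ℤ)) * (PowerSeries.mk fun _ => (1:ℤ)))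
        - PowerSeries.mk fun _ => (1:ℤ) := by
    rw [mk_one_sq]
    ext n
    rw [map_sub, PowerSeries.coeff_C_mul]
    simp only [PowerSeries.coeff_mk]
    ring
  have key : (PowerSeries.mk fun r => (2*(r:ℤ)+1)) * (1 - PowerSeries.X)^2
      = PowerSeries.C (R := ℤ) 2 * (((PowerSeries.mk fun _ => (1:ℤ)) * (1 - PowerSeries.X))
          * ((PowerSeries.mk fun _ => (1:ℤ)) * (1 - PowerSeries.X)))
        - ((PowerSeries.mk fun _ => (1:ℤ)) * (1 - PowerSeries.X)) * (1 - PowerSeries.X) := by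
    rw [h2]; ring
  rw [key, geom_inv]
  rw [show PowerSeries.C (R := ℤ) 2 = 2 from map_ofNat _ 2]
  ring

lemma cnt_mul (b : Bool) : (PowerSeries.mk fun r => cnt b r) * (1 - PowerSeries.X)^2
    = 1 + PowerSeries.C (R := ℤ) (if b then -1 else 1) * PowerSeries.X := by
  cases b
  · simp only [cnt, Bool.false_eq_true, if_false, map_one, one_mul]
    exact odd_mul
  · simp only [cnt, if_true]
    rw [show ((PowerSeries.mk fun _ => (1:ℤ)) * (1 - PowerSeries.X)^2)
        = ((PowerSeries.mk fun _ => (1:ℤ)) * (1 - PowerSeries.X)) * (1 - PowerSeries.X) by ring,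
      geom_inv, one_mul, map_neg, map_one]
    ring

lemma key_lemma : ∀ (k : ℕ) (g : Fin k → Bool),
    (PowerSeries.mk fun m => (Nat.card (SType k m g) : ℤ)) * (1 - PowerSeries.X)^(2*k+1)
      = ∏ j : Fin k, (1 + PowerSeries.C (R := ℤ) (if g j then -1 else 1) * PowerSeries.X) := by
  intro k
  induction k with
  | zero =>
    intro g
    simp only [Nat.mul_zero, Nat.zero_add, pow_one, Finset.univ_eq_empty, Finset.prod_empty]
    simp only [card_zero, Nat.cast_one]
    exact geom_inv
  | succ k ih =>
    intro g
    have hrec : (PowerSeries.mk fun m => (Nat.card (SType (k+1) m g) : ℤ))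
        = (PowerSeries.mk fun m => (Nat.card (SType k m (fun j => g j.castSucc)) : ℤ))
          * (PowerSeries.mk fun r => cnt (g (Fin.last k)) r) := by
      ext n
      rw [PowerSeries.coeff_mul, Finset.Nat.sum_antidiagonal_eq_sum_range_succ_mk]
      simp only [PowerSeries.coeff_mk]
      exact card_succ k n g
    rw [hrec, Fin.prod_univ_castSucc]
    have e : 2*(k+1)+1 = (2*k+1) + 2 := by ring
    rw [e, pow_add]
    rw [show (PowerSeries.mk fun m => (Nat.card (SType k m (fun j => g j.castSucc)) : ℤ))
          * (PowerSeries.mk fun r => cnt (g (Fin.last k)) r)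
          * ((1 - PowerSeries.X)^(2*k+1) * (1 - PowerSeries.X)^2)
        = ((PowerSeries.mk fun m => (Nat.card (SType k m (fun j => g j.castSucc)) : ℤ))
            * (1 - PowerSeries.X)^(2*k+1))
          * ((PowerSeries.mk fun r => cnt (g (Fin.last k)) r) * (1 - PowerSeries.X)^2) by ring,
      ih (fun j => g j.castSucc), cnt_mul]

end Stmt18

open Stmt18 in
/-- The equivariant Ehrhart series of the order polytope of the radio-tower poset `X_k`
under the coordinate-permutation action of `(ℤ/2)^k` equals
`∏_{j=1}^{k} (1 + sgn_j t) / (1-t)^{2k+1}`, stated after clearing denominators in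
`R(G)[[t]]`; the degree-`m` coefficient of the Ehrhart series is the character sending
`g` to the number of `g`-fixed lattice points of the `m`-th dilate of the order
polytope. -/
theorem stmt_18 (k : ℕ) :
    (PowerSeries.mk fun m => fun g : Fin k → Bool =>
        (Nat.card {f : RadioTower k → ℤ //
            (∀ p q : RadioTower k, p ≤ q → 0 ≤ f p ∧ f p ≤ f q ∧ f q ≤ (m : ℤ)) ∧
            ∀ p, f (rtAct g p) = f p} : ℤ)) *
      (1 - PowerSeries.X) ^ (2 * k + 1) =
    ∏ j : Fin k,
      (1 + PowerSeries.C (R := (Fin k → Bool) → ℤ)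
          (fun g => if g j then (-1 : ℤ) else 1) * PowerSeries.X) := by
  apply PowerSeries.ext
  intro n
  funext g
  set φ : ((Fin k → Bool) → ℤ) →+* ℤ := Pi.evalRingHom (fun _ => ℤ) g with hφ
  have hmk : PowerSeries.map φ (PowerSeries.mk fun m => fun g' : Fin k → Bool =>
        (Nat.card {f : RadioTower k → ℤ //
            (∀ p q : RadioTower k, p ≤ q → 0 ≤ f p ∧ f p ≤ f q ∧ f q ≤ (m : ℤ)) ∧
            ∀ p, f (rtAct g' p) = f p} : ℤ))
      = PowerSeries.mk fun m => (Nat.card (SType k m g) : ℤ) := by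
    ext j
    rw [PowerSeries.coeff_map]
    simp only [PowerSeries.coeff_mk]
    rfl
  have hmain : PowerSeries.map φ ((PowerSeries.mk fun m => fun g' : Fin k → Bool =>
        (Nat.card {f : RadioTower k → ℤ //
            (∀ p q : RadioTower k, p ≤ q → 0 ≤ f p ∧ f p ≤ f q ∧ f q ≤ (m : ℤ)) ∧
            ∀ p, f (rtAct g' p) = f p} : ℤ)) *
      (1 - PowerSeries.X) ^ (2 * k + 1))
      = PowerSeries.map φ (∏ j : Fin k,
        (1 + PowerSeries.C (R := (Fin k → Bool) → ℤ)
          (fun g' => if g' j then (-1 : ℤ) else 1) * PowerSeries.X)) := by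
    rw [map_mul, map_pow, map_sub, map_one, PowerSeries.map_X, hmk, map_prod]
    rw [key_lemma k g]
    apply Finset.prod_congr rfl
    intro j _
    rw [map_add, map_one, map_mul, PowerSeries.map_C, PowerSeries.map_X]
    rfl
  have hc := congrArg (PowerSeries.coeff (R := ℤ) n) hmain
  rw [PowerSeries.coeff_map, PowerSeries.coeff_map] at hc
  exact hc
end

section
/- Let X_1, X_2 be finite posets and let a finite group G act by automorphisms on the ordinal sum (join) X_1 * X_2. Then G preserves X_1 and X_2 separately, and the equivariant Ehrhart series satisfy Ehr_G(O(X_1 * X_2), t) = (1−t) · Ehr_G(O(X_1), t) · Ehr_G(O(X_2), t) in R(G)[[t]]. -/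
open Sum
set_option linter.unusedSectionVars false
set_option maxHeartbeats 1000000


section pres
variable {X₁ X₂ : Type} [Fintype X₁] [Fintype X₂] [PartialOrder X₁] [PartialOrder X₂]

lemma upper_card_eq (e : (X₁ ⊕ₗ X₂) ≃o (X₁ ⊕ₗ X₂)) (a : X₁ ⊕ₗ X₂) :
    Nat.card {b // a ≤ b} = Nat.card {b // e a ≤ b} :=
  Nat.card_congr ⟨fun b => ⟨e b.1, e.le_iff_le.mpr b.2⟩,
    fun b => ⟨e.symm b.1, by have := b.2; rw [← e.apply_symm_apply b.1] at this; exact e.le_iff_le.mp this⟩,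
    fun b => by simp, fun b => by simp⟩

lemma upper_card_inl (x : X₁) :
    Fintype.card X₂ + 1 ≤ Nat.card {b : X₁ ⊕ₗ X₂ // toLex (inl x) ≤ b} := by
  have hinj : Function.Injective (fun z : X₂ ⊕ Unit =>
      (Sum.elim (fun y => ⟨toLex (inr y), Sum.Lex.inl_le_inr x y⟩)
        (fun _ => ⟨toLex (inl x), le_rfl⟩) z : {b : X₁ ⊕ₗ X₂ // toLex (inl x) ≤ b})) := by
    rintro (y|⟨⟩) (y'|⟨⟩) h <;> simp_all [Subtype.ext_iff]
  have := Nat.card_le_card_of_injective _ hinj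
  simpa [Nat.card_sum, Nat.card_eq_fintype_card] using this

lemma upper_card_inr (y : X₂) :
    Nat.card {b : X₁ ⊕ₗ X₂ // toLex (inr y) ≤ b} ≤ Fintype.card X₂ := by
  have hinj : Function.Injective (fun b : {b : X₁ ⊕ₗ X₂ // toLex (inr y) ≤ b} =>
      (ofLex b.1).getRight (by
        obtain ⟨b, hb⟩ := b
        obtain (z|z) := b
        · exact absurd hb Sum.Lex.not_inr_le_inl
        · rfl)) := by
    rintro ⟨(b|b), hb⟩ ⟨(c|c), hc⟩ h
    · exact absurd hb Sum.Lex.not_inr_le_inl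
    · exact absurd hb Sum.Lex.not_inr_le_inl
    · exact absurd hc Sum.Lex.not_inr_le_inl
    · simp_all [Subtype.ext_iff]; exact h
  simpa [Nat.card_eq_fintype_card] using Nat.card_le_card_of_injective _ hinj

lemma pres_inl (e : (X₁ ⊕ₗ X₂) ≃o (X₁ ⊕ₗ X₂)) (x : X₁) :
    ∃ y : X₁, e (toLex (inl x)) = toLex (inl y) := by
  rcases h : ofLex (e (toLex (inl x))) with y | y
  · exact ⟨y, by rw [← h]; rfl⟩
  · exfalso
    have h' : e (toLex (inl x)) = toLex (inr y) := by rw [← h]; rfl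
    have := upper_card_eq e (toLex (inl x))
    rw [h'] at this
    have h1 := upper_card_inl (X₂ := X₂) x
    have h2 := upper_card_inr (X₁ := X₁) y
    omega

lemma pres_inr (e : (X₁ ⊕ₗ X₂) ≃o (X₁ ⊕ₗ X₂)) (y : X₂) :
    ∃ z : X₂, e (toLex (inr y)) = toLex (inr z) := by
  rcases h : ofLex (e (toLex (inr y))) with z | z
  · exfalso
    have h' : e (toLex (inr y)) = toLex (inl z) := by rw [← h]; rfl
    obtain ⟨w, hw⟩ := pres_inl e.symm z
    rw [← h', e.symm_apply_apply] at hw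
    exact absurd (toLex.injective hw) (by simp)
  · exact ⟨z, by rw [← h]; rfl⟩

end pres


def OP (Y : Type) [PartialOrder Y] (a : Y → Y) (m : ℕ) : Type :=
  {f : Y → ℤ // (∀ x y : Y, x ≤ y → 0 ≤ f x ∧ f x ≤ f y ∧ f y ≤ (m : ℤ)) ∧ ∀ x, f (a x) = f x}

instance OP.finite (Y : Type) [Fintype Y] [PartialOrder Y] (a : Y → Y) (m : ℕ) :
    Finite (OP Y a m) := by
  have : Finite (Y → Set.Icc (0:ℤ) m) := inferInstance
  apply Finite.of_injective (fun f : OP Y a m => fun y : Y =>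
    (⟨f.1 y, (f.2.1 y y le_rfl).1, (f.2.1 y y le_rfl).2.2⟩ : Set.Icc (0:ℤ) m))
  intro f g h
  apply Subtype.ext
  funext y
  exact congrArg Subtype.val (congrFun h y)

section count
variable {X₁ X₂ : Type} [Fintype X₁] [Fintype X₂] [PartialOrder X₁] [PartialOrder X₂]
  (a₁ : X₁ → X₁) (a₂ : X₂ → X₂) (E : (X₁ ⊕ₗ X₂) → (X₁ ⊕ₗ X₂))

variable (hE1 : ∀ x, E (toLex (inl x)) = toLex (inl (a₁ x)))
  (hE2 : ∀ y, E (toLex (inr y)) = toLex (inr (a₂ y)))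

include hE1 hE2 in
def comb (m k : ℕ) (hk : k ≤ m) (f₁ : OP X₁ a₁ k) (f₂ : OP X₂ a₂ (m - k)) :
    OP (X₁ ⊕ₗ X₂) E m := by
  refine ⟨fun u => Sum.elim f₁.1 (fun y => f₂.1 y + k) (ofLex u), ?_, ?_⟩
  · intro u v huv
    obtain (x|x) := u <;> obtain (y|y) := v
    · have h := f₁.2.1 x y (Sum.Lex.inl_le_inl_iff.mp huv)
      show 0 ≤ f₁.1 x ∧ f₁.1 x ≤ f₁.1 y ∧ f₁.1 y ≤ (m:ℤ)
      omega
    · have h1 := f₁.2.1 x x le_rfl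
      have h2 := f₂.2.1 y y le_rfl
      show 0 ≤ f₁.1 x ∧ f₁.1 x ≤ f₂.1 y + k ∧ f₂.1 y + k ≤ (m:ℤ)
      omega
    · exact absurd huv Sum.Lex.not_inr_le_inl
    · have h := f₂.2.1 x y (Sum.Lex.inr_le_inr_iff.mp huv)
      show 0 ≤ f₂.1 x + k ∧ f₂.1 x + k ≤ f₂.1 y + k ∧ f₂.1 y + k ≤ (m:ℤ)
      omega
  · intro u
    obtain (x|x) := u
    · show Sum.elim f₁.1 (fun y => f₂.1 y + k) (ofLex (E (toLex (inl x)))) = f₁.1 x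
      rw [hE1 x]
      exact f₁.2.2 x
    · show Sum.elim f₁.1 (fun y => f₂.1 y + k) (ofLex (E (toLex (inr x)))) = f₂.1 x + k
      rw [hE2 x]
      show f₂.1 (a₂ x) + k = f₂.1 x + k
      rw [f₂.2.2 x]

include hE1 hE2 in
def res₁ (m : ℕ) (f : OP (X₁ ⊕ₗ X₂) E m) (k : ℕ)
    (hk : ∀ x : X₁, f.1 (toLex (inl x)) ≤ (k : ℤ)) : OP X₁ a₁ k := by
  refine ⟨fun x => f.1 (toLex (inl x)), fun x y hxy => ?_, fun x => ?_⟩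
  · have h := f.2.1 (toLex (inl x)) (toLex (inl y)) (Sum.Lex.inl_le_inl_iff.mpr hxy)
    exact ⟨h.1, h.2.1, hk y⟩
  · have h := f.2.2 (toLex (inl x))
    rw [hE1 x] at h
    exact h

include hE1 hE2 in
def res₂ (m : ℕ) (f : OP (X₁ ⊕ₗ X₂) E m) (k : ℕ) (hkm : k ≤ m)
    (hk : ∀ y : X₂, (k : ℤ) ≤ f.1 (toLex (inr y))) : OP X₂ a₂ (m - k) := by
  refine ⟨fun y => f.1 (toLex (inr y)) - k, fun x y hxy => ?_, fun y => ?_⟩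
  · dsimp only
    have h := f.2.1 (toLex (inr x)) (toLex (inr y)) (Sum.Lex.inr_le_inr_iff.mpr hxy)
    have h2 := hk x
    refine ⟨by omega, by omega, by omega⟩
  · dsimp only
    have h := f.2.2 (toLex (inr y))
    rw [hE2 y] at h
    omega

open scoped Classical in
noncomputable def thr (m : ℕ) (f : OP (X₁ ⊕ₗ X₂) E m) : ℕ :=
  if h : Nonempty X₂ then
    haveI := h
    (Finset.univ.inf' Finset.univ_nonempty (fun y => f.1 (toLex (inr y)))).toNat
  else m

lemma thr_le_inr (m : ℕ) (f : OP (X₁ ⊕ₗ X₂) E m) (y : X₂) :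
    (thr E m f : ℤ) ≤ f.1 (toLex (inr y)) := by
  have hne : Nonempty X₂ := ⟨y⟩
  unfold thr
  rw [dif_pos hne]
  have h := Finset.inf'_le (b := y) (fun y => f.1 (toLex (inr y))) (Finset.mem_univ y)
  have h0 := (f.2.1 (toLex (inr y)) (toLex (inr y)) le_rfl).1
  omega

lemma inl_le_thr (m : ℕ) (f : OP (X₁ ⊕ₗ X₂) E m) (x : X₁) :
    f.1 (toLex (inl x)) ≤ (thr E m f : ℤ) := by
  unfold thr
  split_ifs with hne
  · have h := Finset.le_inf' (Finset.univ_nonempty (α := X₂)) (fun y => f.1 (toLex (inr y)))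
      (a := f.1 (toLex (inl x)))
      (fun y _ => (f.2.1 (toLex (inl x)) (toLex (inr y)) (Sum.Lex.inl_le_inr x y)).2.1)
    have h0 := (f.2.1 (toLex (inl x)) (toLex (inl x)) le_rfl).1
    omega
  · exact (f.2.1 (toLex (inl x)) (toLex (inl x)) le_rfl).2.2

lemma thr_le (m : ℕ) (f : OP (X₁ ⊕ₗ X₂) E m) : thr E m f ≤ m := by
  unfold thr
  split_ifs with hne
  · obtain ⟨y⟩ := hne
    have h := Finset.inf'_le (b := y) (fun y => f.1 (toLex (inr y))) (Finset.mem_univ y)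
    have h1 := (f.2.1 (toLex (inr y)) (toLex (inr y)) le_rfl).2.2
    omega
  · exact le_rfl

lemma thr_witness (m : ℕ) (f : OP (X₁ ⊕ₗ X₂) E m) (h : Nonempty X₂) :
    ∃ y₀, f.1 (toLex (inr y₀)) = (thr E m f : ℤ) := by
  unfold thr
  rw [dif_pos h]
  haveI := h
  obtain ⟨y₀, _, hy₀⟩ := Finset.exists_mem_eq_inf' (Finset.univ_nonempty (α := X₂))
    (fun y => f.1 (toLex (inr y)))
  have h0 := (f.2.1 (toLex (inr y₀)) (toLex (inr y₀)) le_rfl).1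
  exact ⟨y₀, by omega⟩

def shiftUp (n k : ℕ) (hk : k ≤ n) (f : OP X₂ a₂ (n - k)) : OP X₂ a₂ (n + 1 - k) := by
  refine ⟨fun y => f.1 y + 1, fun x y hxy => ?_, fun y => ?_⟩
  · dsimp only
    have h := f.2.1 x y hxy
    refine ⟨by omega, by omega, by omega⟩
  · dsimp only
    have h := f.2.2 y
    omega

def shiftDown (n k : ℕ) (hk : k ≤ n) (f : OP X₂ a₂ (n + 1 - k)) (h1 : ∀ y, 1 ≤ f.1 y) :
    OP X₂ a₂ (n - k) := by
  refine ⟨fun y => f.1 y - 1, fun x y hxy => ?_, fun y => ?_⟩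
  · dsimp only
    have h := f.2.1 x y hxy
    have := h1 x
    refine ⟨by omega, by omega, by omega⟩
  · dsimp only
    have h := f.2.2 y
    omega

def Dt (n : ℕ) : Type := (k : Fin (n+1)) × (OP X₁ a₁ k.1 × OP X₂ a₂ (n - k.1))

instance Dt.finite {X₁ X₂ : Type} [Fintype X₁] [Fintype X₂] [PartialOrder X₁] [PartialOrder X₂]
    (a₁ : X₁ → X₁) (a₂ : X₂ → X₂) (n : ℕ) : Finite (Dt a₁ a₂ n) := by
  unfold Dt; infer_instance

include hE1 hE2 in
noncomputable def ψm (m : ℕ) : (OP (X₁ ⊕ₗ X₂) E (m+1) ⊕ Dt a₁ a₂ m) → Dt a₁ a₂ (m+1) :=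
  fun z => match z with
  | .inl f => ⟨⟨thr E (m+1) f, by have := thr_le E (m+1) f; omega⟩,
      res₁ a₁ E hE1 (m+1) f (thr E (m+1) f) (inl_le_thr E (m+1) f),
      res₂ a₂ E hE2 (m+1) f (thr E (m+1) f) (thr_le E (m+1) f) (thr_le_inr E (m+1) f)⟩
  | .inr ⟨⟨k, hk⟩, f₁, f₂⟩ => ⟨⟨k, by omega⟩, f₁, shiftUp a₂ m k (by omega) f₂⟩

include hE1 hE2 in
noncomputable def φm (m : ℕ) : Dt a₁ a₂ (m+1) → (OP (X₁ ⊕ₗ X₂) E (m+1) ⊕ Dt a₁ a₂ m) :=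
  fun d =>
    if h : d.1.1 ≤ m ∧ ∀ y : X₂, 1 ≤ d.2.2.1 y then
      .inr ⟨⟨d.1.1, by omega⟩, d.2.1, shiftDown a₂ m d.1.1 h.1 d.2.2 h.2⟩
    else
      .inl (comb a₁ a₂ E hE1 hE2 (m+1) d.1.1 (by have := d.1.2; omega) d.2.1 d.2.2)


include hE1 hE2 in
lemma ψm_inj (m : ℕ) : Function.Injective (ψm a₁ a₂ E hE1 hE2 m) := by
  rintro (f | ⟨⟨k, hk⟩, f₁, f₂⟩) (f' | ⟨⟨k', hk'⟩, f₁', f₂'⟩) h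
  · -- inl / inl
    have hidx : thr E (m+1) f = thr E (m+1) f' := congrArg (fun d => d.1.1) h
    have hv1 : ∀ x : X₁, f.1 (toLex (inl x)) = f'.1 (toLex (inl x)) :=
      fun x => congrArg (fun d : Dt a₁ a₂ (m+1) => d.2.1.1 x) h
    have hv2 : ∀ y : X₂,
        f.1 (toLex (inr y)) - (thr E (m+1) f : ℤ) + (thr E (m+1) f : ℤ)
          = f'.1 (toLex (inr y)) - (thr E (m+1) f' : ℤ) + (thr E (m+1) f' : ℤ) :=
      fun y => congrArg (fun d : Dt a₁ a₂ (m+1) => d.2.2.1 y + (d.1.1 : ℤ)) h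
    have : f = f' := by
      apply Subtype.ext; funext u
      obtain (x|x) := u
      · exact hv1 x
      · show f.1 (toLex (inr x)) = f'.1 (toLex (inr x))
        have := hv2 x; omega
    rw [this]
  · -- inl / inr : impossible
    exfalso
    have hidx : thr E (m+1) f = k' := congrArg (fun d => d.1.1) h
    by_cases hne : Nonempty X₂
    · obtain ⟨y₀, hy₀⟩ := thr_witness E (m+1) f hne
      have hv : f.1 (toLex (inr y₀)) - (thr E (m+1) f : ℤ) + (thr E (m+1) f : ℤ)
          = (f₂'.1 y₀ + 1) + (k' : ℤ) :=
        congrArg (fun d : Dt a₁ a₂ (m+1) => d.2.2.1 y₀ + (d.1.1 : ℤ)) h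
      have h0 : 0 ≤ f₂'.1 y₀ := (f₂'.2.1 y₀ y₀ le_rfl).1
      omega
    · have : thr E (m+1) f = m+1 := by unfold thr; rw [dif_neg hne]
      omega
  · -- inr / inl : impossible
    exfalso
    have hidx : k = thr E (m+1) f' := congrArg (fun d => d.1.1) h
    by_cases hne : Nonempty X₂
    · obtain ⟨y₀, hy₀⟩ := thr_witness E (m+1) f' hne
      have hv : (f₂.1 y₀ + 1) + (k : ℤ)
          = f'.1 (toLex (inr y₀)) - (thr E (m+1) f' : ℤ) + (thr E (m+1) f' : ℤ) :=
        congrArg (fun d : Dt a₁ a₂ (m+1) => d.2.2.1 y₀ + (d.1.1 : ℤ)) h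
      have h0 : 0 ≤ f₂.1 y₀ := (f₂.2.1 y₀ y₀ le_rfl).1
      omega
    · have : thr E (m+1) f' = m+1 := by unfold thr; rw [dif_neg hne]
      omega
  · -- inr / inr
    have hidx : k = k' := congrArg (fun d => d.1.1) h
    subst hidx
    have hv1 : ∀ x : X₁, f₁.1 x = f₁'.1 x :=
      fun x => congrArg (fun d : Dt a₁ a₂ (m+1) => d.2.1.1 x) h
    have hv2 : ∀ y : X₂, f₂.1 y + 1 + (k : ℤ) = f₂'.1 y + 1 + (k : ℤ) :=
      fun y => congrArg (fun d : Dt a₁ a₂ (m+1) => d.2.2.1 y + (d.1.1 : ℤ)) h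
    have e1 : f₁ = f₁' := Subtype.ext (funext hv1)
    have e2 : f₂ = f₂' := Subtype.ext (funext fun y => by have := hv2 y; omega)
    rw [e1, e2]

include hE1 hE2 in
lemma φm_inj (m : ℕ) : Function.Injective (φm a₁ a₂ E hE1 hE2 m) := by
  rintro ⟨⟨k, hk⟩, f₁, f₂⟩ ⟨⟨k', hk'⟩, f₁', f₂'⟩ h
  simp only [φm] at h
  by_cases h1 : k ≤ m ∧ ∀ y : X₂, 1 ≤ f₂.1 y <;>
    by_cases h2 : k' ≤ m ∧ ∀ y : X₂, 1 ≤ f₂'.1 y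
  · -- both true: inr = inr
    rw [dif_pos h1, dif_pos h2] at h
    replace h := Sum.inr.inj h
    have hidx : k = k' := congrArg (fun d => d.1.1) h
    subst hidx
    have hv1 : ∀ x : X₁, f₁.1 x = f₁'.1 x :=
      fun x => congrArg (fun d : Dt a₁ a₂ m => d.2.1.1 x) h
    have hv2 : ∀ y : X₂, f₂.1 y - 1 = f₂'.1 y - 1 :=
      fun y => congrArg (fun d : Dt a₁ a₂ m => d.2.2.1 y) h
    have e1 : f₁ = f₁' := Subtype.ext (funext hv1)
    have e2 : f₂ = f₂' := Subtype.ext (funext fun y => by have := hv2 y; omega)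
    rw [e1, e2]
  · rw [dif_pos h1, dif_neg h2] at h
    simp at h
  · rw [dif_neg h1, dif_pos h2] at h
    simp at h
  · -- both false: inl = inl
    rw [dif_neg h1, dif_neg h2] at h
    replace h := Sum.inl.inj h
    have hval := congrFun (congrArg Subtype.val h)
    have hvl : ∀ x : X₁, f₁.1 x = f₁'.1 x := fun x => hval (toLex (inl x))
    have hvr : ∀ y : X₂, f₂.1 y + (k : ℤ) = f₂'.1 y + (k' : ℤ) :=
      fun y => hval (toLex (inr y))
    push_neg at h1 h2
    have hidx : k = k' := by
      by_cases hkm : k ≤ m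
      · obtain ⟨y₀, hy₀⟩ := h1 hkm
        have h00 : 0 ≤ f₂.1 y₀ := (f₂.2.1 y₀ y₀ le_rfl).1
        by_cases hk'm : k' ≤ m
        · obtain ⟨y₁, hy₁⟩ := h2 hk'm
          have h01 : 0 ≤ f₂'.1 y₁ := (f₂'.2.1 y₁ y₁ le_rfl).1
          have h02 : 0 ≤ f₂'.1 y₀ := (f₂'.2.1 y₀ y₀ le_rfl).1
          have h03 : 0 ≤ f₂.1 y₁ := (f₂.2.1 y₁ y₁ le_rfl).1
          have := hvr y₀
          have := hvr y₁
          omega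
        · have h02 : f₂'.1 y₀ ≤ ((m + 1 - k' : ℕ) : ℤ) := (f₂'.2.1 y₀ y₀ le_rfl).2.2
          have h03 : 0 ≤ f₂'.1 y₀ := (f₂'.2.1 y₀ y₀ le_rfl).1
          have := hvr y₀
          omega
      · by_cases hk'm : k' ≤ m
        · obtain ⟨y₁, hy₁⟩ := h2 hk'm
          have h01 : 0 ≤ f₂'.1 y₁ := (f₂'.2.1 y₁ y₁ le_rfl).1
          have h02 : f₂.1 y₁ ≤ ((m + 1 - k : ℕ) : ℤ) := (f₂.2.1 y₁ y₁ le_rfl).2.2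
          have h03 : 0 ≤ f₂.1 y₁ := (f₂.2.1 y₁ y₁ le_rfl).1
          have := hvr y₁
          omega
        · omega
    subst hidx
    have e1 : f₁ = f₁' := Subtype.ext (funext hvl)
    have e2 : f₂ = f₂' := Subtype.ext (funext fun y => by have := hvr y; omega)
    rw [e1, e2]


lemma nat_card_sigma {n : ℕ} (T : Fin n → Type) [∀ k, Finite (T k)] :
    Nat.card ((k : Fin n) × T k) = ∑ k : Fin n, Nat.card (T k) := by
  letI := fun k => Fintype.ofFinite (T k)
  simp [Nat.card_eq_fintype_card]

lemma card_Dt (n : ℕ) : Nat.card (Dt a₁ a₂ n)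
    = ∑ k ∈ Finset.range (n+1), Nat.card (OP X₁ a₁ k) * Nat.card (OP X₂ a₂ (n - k)) := by
  have h := nat_card_sigma (fun k : Fin (n+1) => OP X₁ a₁ k.1 × OP X₂ a₂ (n - k.1))
  rw [show Dt a₁ a₂ n = ((k : Fin (n+1)) × (OP X₁ a₁ k.1 × OP X₂ a₂ (n - k.1))) from rfl, h]
  rw [← Fin.sum_univ_eq_sum_range (fun k => Nat.card (OP X₁ a₁ k) * Nat.card (OP X₂ a₂ (n - k)))]
  exact Finset.sum_congr rfl fun k _ => Nat.card_prod _ _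

include hE1 hE2 in
lemma step_count (m : ℕ) :
    Nat.card (OP (X₁ ⊕ₗ X₂) E (m+1))
        + ∑ k ∈ Finset.range (m+1), Nat.card (OP X₁ a₁ k) * Nat.card (OP X₂ a₂ (m - k))
      = ∑ k ∈ Finset.range (m+2), Nat.card (OP X₁ a₁ k) * Nat.card (OP X₂ a₂ (m+1-k)) := by
  rw [← card_Dt, ← card_Dt, ← Nat.card_sum]
  exact le_antisymm (Nat.card_le_card_of_injective _ (ψm_inj a₁ a₂ E hE1 hE2 m))
    (Nat.card_le_card_of_injective _ (φm_inj a₁ a₂ E hE1 hE2 m))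

include hE1 hE2 in
lemma base_count :
    Nat.card (OP (X₁ ⊕ₗ X₂) E 0) = Nat.card (OP X₁ a₁ 0) * Nat.card (OP X₂ a₂ 0) := by
  rw [← Nat.card_prod]
  refine le_antisymm
    (Nat.card_le_card_of_injective (fun f =>
      (res₁ a₁ E hE1 0 f 0 (fun x => by
          simpa using (f.2.1 (toLex (inl x)) (toLex (inl x)) le_rfl).2.2),
       res₂ a₂ E hE2 0 f 0 le_rfl (fun y => (f.2.1 (toLex (inr y)) (toLex (inr y)) le_rfl).1)))
      ?_)
    (Nat.card_le_card_of_injective (fun p : OP X₁ a₁ 0 × OP X₂ a₂ 0 =>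
      comb a₁ a₂ E hE1 hE2 0 0 le_rfl p.1 p.2) ?_)
  · intro f f' h
    have hvl : ∀ x : X₁, f.1 (toLex (inl x)) = f'.1 (toLex (inl x)) :=
      fun x => congrArg (fun p : OP X₁ a₁ 0 × OP X₂ a₂ 0 => p.1.1 x) h
    have hvr : ∀ y : X₂, f.1 (toLex (inr y)) - ((0:ℕ):ℤ) = f'.1 (toLex (inr y)) - ((0:ℕ):ℤ) :=
      fun y => congrArg (fun p : OP X₁ a₁ 0 × OP X₂ a₂ 0 => p.2.1 y) h
    apply Subtype.ext; funext u
    obtain (x|x) := u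
    · exact hvl x
    · show f.1 (toLex (inr x)) = f'.1 (toLex (inr x))
      have := hvr x; omega
  · intro p p' h
    have hval := congrFun (congrArg Subtype.val h)
    have hvl : ∀ x : X₁, p.1.1 x = p'.1.1 x := fun x => hval (toLex (inl x))
    have hvr : ∀ y : X₂, p.2.1 y + ((0:ℕ):ℤ) = p'.2.1 y + ((0:ℕ):ℤ) :=
      fun y => hval (toLex (inr y))
    ext1
    · exact Subtype.ext (funext hvl)
    · exact Subtype.ext (funext fun y => by have := hvr y; omega)

include hE1 hE2 in
lemma count_succ (m : ℕ) :
    (Nat.card (OP (X₁ ⊕ₗ X₂) E (m+1)) : ℤ)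
      = (∑ p ∈ Finset.HasAntidiagonal.antidiagonal (m+1),
          (Nat.card (OP X₁ a₁ p.1) : ℤ) * (Nat.card (OP X₂ a₂ p.2) : ℤ))
        - ∑ p ∈ Finset.HasAntidiagonal.antidiagonal m,
          (Nat.card (OP X₁ a₁ p.1) : ℤ) * (Nat.card (OP X₂ a₂ p.2) : ℤ) := by
  rw [Finset.Nat.sum_antidiagonal_eq_sum_range_succ_mk, Finset.Nat.sum_antidiagonal_eq_sum_range_succ_mk]
  rw [eq_sub_iff_add_eq]
  have hs := step_count a₁ a₂ E hE1 hE2 m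
  push_cast
  exact_mod_cast congrArg (Nat.cast : ℕ → ℤ) hs

end count


/-- The equivariant Ehrhart series of the order polytope of a finite poset `X` under a
group acting through `act` on `X` by poset automorphisms: the degree-`m` coefficient is
the character sending `g` to the number of `g`-fixed lattice points of the `m`-th
dilate of the order polytope. -/
noncomputable def eqEhrOrderPolytope (X : Type) [PartialOrder X] {G : Type}
    (act : G → X → X) : PowerSeries (G → ℤ) :=
  PowerSeries.mk fun m => fun g : G =>
    (Nat.card {f : X → ℤ //
        (∀ x y : X, x ≤ y → 0 ≤ f x ∧ f x ≤ f y ∧ f y ≤ (m : ℤ)) ∧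
        ∀ x, f (act g x) = f x} : ℤ)

lemma eqEhr_coeff (X : Type) [PartialOrder X] {G : Type} (act : G → X → X) (m : ℕ) (g : G) :
    PowerSeries.coeff m (eqEhrOrderPolytope X act) g
      = (Nat.card (OP X (act g) m) : ℤ) := by
  rw [eqEhrOrderPolytope, PowerSeries.coeff_mk]
  rfl

/-- For a finite group acting on the ordinal sum (join) `X₁ * X₂` by poset
automorphisms: the action preserves `X₁` and `X₂` separately, and the equivariant
Ehrhart series of the order polytopes satisfy
`Ehr_G(O(X₁ * X₂), t) = (1 - t) · Ehr_G(O(X₁), t) · Ehr_G(O(X₂), t)`. -/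
theorem stmt_19 {X₁ X₂ : Type} [Fintype X₁] [Fintype X₂]
    [PartialOrder X₁] [PartialOrder X₂]
    {G : Type} [Group G] [Finite G]
    (ρ : G →* ((X₁ ⊕ₗ X₂) ≃o (X₁ ⊕ₗ X₂))) :
    (∀ (g : G) (x : X₁), ∃ y : X₁, ρ g (toLex (Sum.inl x)) = toLex (Sum.inl y)) ∧
    (∀ (g : G) (x : X₂), ∃ y : X₂, ρ g (toLex (Sum.inr x)) = toLex (Sum.inr y)) ∧
    eqEhrOrderPolytope (X₁ ⊕ₗ X₂) (fun g => (ρ g : (X₁ ⊕ₗ X₂) → (X₁ ⊕ₗ X₂))) =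
      (1 - PowerSeries.X) *
        eqEhrOrderPolytope X₁
          (fun g x => Sum.elim id (fun _ => x) (ofLex (ρ g (toLex (Sum.inl x))))) *
        eqEhrOrderPolytope X₂
          (fun g x => Sum.elim (fun _ => x) id (ofLex (ρ g (toLex (Sum.inr x))))) := by
  have h1 : ∀ (g : G) (x : X₁), ∃ y : X₁, ρ g (toLex (Sum.inl x)) = toLex (Sum.inl y) :=
    fun g x => pres_inl (ρ g) x
  have h2 : ∀ (g : G) (x : X₂), ∃ y : X₂, ρ g (toLex (Sum.inr x)) = toLex (Sum.inr y) :=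
    fun g x => pres_inr (ρ g) x
  refine ⟨h1, h2, ?_⟩
  set act₁ : G → X₁ → X₁ :=
    fun g x => Sum.elim id (fun _ => x) (ofLex (ρ g (toLex (Sum.inl x)))) with hact₁
  set act₂ : G → X₂ → X₂ :=
    fun g x => Sum.elim (fun _ => x) id (ofLex (ρ g (toLex (Sum.inr x)))) with hact₂
  have key1 : ∀ (g : G) (x : X₁), (ρ g) (toLex (Sum.inl x)) = toLex (Sum.inl (act₁ g x)) := by
    intro g x
    obtain ⟨y, hy⟩ := h1 g x
    simp [hact₁, hy]
  have key2 : ∀ (g : G) (y : X₂), (ρ g) (toLex (Sum.inr y)) = toLex (Sum.inr (act₂ g y)) := by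
    intro g y
    obtain ⟨z, hz⟩ := h2 g y
    simp [hact₂, hz]
  rw [show (1 - PowerSeries.X) * eqEhrOrderPolytope X₁ act₁ * eqEhrOrderPolytope X₂ act₂
      = eqEhrOrderPolytope X₁ act₁ * eqEhrOrderPolytope X₂ act₂
        - PowerSeries.X * (eqEhrOrderPolytope X₁ act₁ * eqEhrOrderPolytope X₂ act₂) from by
    ring]
  apply PowerSeries.ext
  intro m
  rw [map_sub, PowerSeries.coeff_mul]
  cases m with
  | zero =>
    rw [PowerSeries.coeff_zero_X_mul, sub_zero]
    funext g
    rw [Finset.sum_apply]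
    rw [Finset.Nat.antidiagonal_zero, Finset.sum_singleton]
    simp only [Pi.mul_apply, eqEhr_coeff]
    exact_mod_cast base_count (act₁ g) (act₂ g) (⇑(ρ g)) (key1 g) (key2 g)
  | succ m =>
    rw [PowerSeries.coeff_succ_X_mul, PowerSeries.coeff_mul]
    funext g
    simp only [Pi.sub_apply, Finset.sum_apply, Pi.mul_apply, eqEhr_coeff]
    exact count_succ (act₁ g) (act₂ g) (⇑(ρ g)) (key1 g) (key2 g) m
end
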